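/- arXiv:0804.1825 — 6 statements merged into one kernel-verified Lean document; each statement's English description precedes it below -/
import Mathlib

section
/- For each fixed j with 1 ≤ j ≤ n, the automorphisms α_{i,j} (over all i ≠ j) pairwise commute, and their product ∏_{i ≠ j} α_{i,j} equals the inner automorphism of F_n given by conjugation by x_j (i.e., w ↦ x_j w x_j^{-1}). In particular, every inner automorphism of F_n lies in the subgroup of Aut(F_n) generated by the α_{i,j}. -/
private lemma aut_ext {n : ℕ} (f g : MulAut (FreeGroup (Fin n)))
    (h : ∀ k, f (FreeGroup.of k) = g (FreeGroup.of k)) : f = g := by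
  apply MulEquiv.toMonoidHom_injective
  exact FreeGroup.ext_hom _ _ h

private lemma key {n : ℕ} (α : Fin n → Fin n → MulAut (FreeGroup (Fin n)))
    (hconj : ∀ i j : Fin n, i ≠ j →
      α i j (FreeGroup.of i) = FreeGroup.of j * FreeGroup.of i * (FreeGroup.of j)⁻¹)
    (hfix : ∀ i j k : Fin n, i ≠ j → k ≠ i → α i j (FreeGroup.of k) = FreeGroup.of k)
    (j : Fin n) (s : Finset (Fin n)) (hs : ∀ i ∈ s, i ≠ j) (hc) (k : Fin n) :
    s.noncommProd (fun i => α i j) hc (FreeGroup.of k)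
      = if k ∈ s then FreeGroup.of j * FreeGroup.of k * (FreeGroup.of j)⁻¹
        else FreeGroup.of k := by
  classical
  induction s using Finset.induction_on with
  | empty => simp
  | @insert a s ha ih =>
    rw [Finset.noncommProd_insert_of_notMem _ _ _ _ ha]
    have hs' : ∀ i ∈ s, i ≠ j := fun i hi => hs i (Finset.mem_insert_of_mem hi)
    have haj : a ≠ j := hs a (Finset.mem_insert_self a s)
    have := ih hs' (hc.mono (Finset.coe_subset.mpr (Finset.subset_insert a s)))
    simp only [MulAut.mul_apply] at *
    rw [this]
    by_cases hka : k = a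
    · subst hka
      simp [ha, hconj k j haj]
    · by_cases hks : k ∈ s
      · simp only [hks, if_pos, Finset.mem_insert, hks, or_true, if_pos]
        rw [_root_.map_mul, _root_.map_mul, _root_.map_inv, hfix a j j haj (Ne.symm haj),
          hfix a j k haj hka]
      · simp only [hks, if_neg, Finset.mem_insert, hka, hks, or_self, if_neg,
          not_false_iff]
        exact hfix a j k haj hka

/-- For a fixed `j`, the automorphisms `α i j` (over all `i ≠ j`) pairwise
commute, their product `∏_{i ≠ j} α i j` equals the inner automorphism of `F_n` given by
conjugation by `x j`, and in particular every inner automorphism of `F_n` lies in the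
subgroup of `Aut(F_n)` generated by the `α i j`. -/
theorem product_of_column_is_conjugation (n : ℕ) (hn : 2 ≤ n)
    (α : Fin n → Fin n → MulAut (FreeGroup (Fin n)))
    (hconj : ∀ i j : Fin n, i ≠ j →
      α i j (FreeGroup.of i) = FreeGroup.of j * FreeGroup.of i * (FreeGroup.of j)⁻¹)
    (hfix : ∀ i j k : Fin n, i ≠ j → k ≠ i → α i j (FreeGroup.of k) = FreeGroup.of k)
    (j : Fin n) :
    (∀ i i' : Fin n, i ≠ j → i' ≠ j → Commute (α i j) (α i' j)) ∧
    (∀ hc : (↑(Finset.univ.erase j) : Set (Fin n)).Pairwise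
        fun a b => Commute (α a j) (α b j),
      Finset.noncommProd (Finset.univ.erase j) (fun i => α i j) hc
        = MulAut.conj (FreeGroup.of j)) ∧
    (∀ g : FreeGroup (Fin n), MulAut.conj g ∈
      Subgroup.closure {β : MulAut (FreeGroup (Fin n)) | ∃ i k : Fin n, i ≠ k ∧ β = α i k}) := by
  classical
  -- pairwise commutation for a general column
  have comm : ∀ (j : Fin n) (i i' : Fin n), i ≠ j → i' ≠ j → Commute (α i j) (α i' j) := by
    intro j i i' hij hi'j
    rcases eq_or_ne i i' with rfl | hii'
    · exact Commute.refl _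
    · apply aut_ext
      intro k
      simp only [MulAut.mul_apply]
      by_cases hk : k = i
      · subst hk
        rw [hfix i' j k hi'j hii', hconj k j hij, _root_.map_mul, _root_.map_mul, _root_.map_inv,
          hfix i' j j hi'j (Ne.symm hi'j), hfix i' j k hi'j hii']
      · by_cases hk' : k = i'
        · subst hk'
          rw [hfix i j k hij hii'.symm, hconj k j hi'j, _root_.map_mul, _root_.map_mul, _root_.map_inv,
            hfix i j j hij (Ne.symm hij), hfix i j k hij hii'.symm]
        · rw [hfix i' j k hi'j hk', hfix i j k hij hk, hfix i' j k hi'j hk']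
  -- product formula for a general column
  have prod : ∀ (j : Fin n) (hc : (↑(Finset.univ.erase j) : Set (Fin n)).Pairwise
        fun a b => Commute (α a j) (α b j)),
      Finset.noncommProd (Finset.univ.erase j) (fun i => α i j) hc
        = MulAut.conj (FreeGroup.of j) := by
    intro j hc
    apply aut_ext
    intro k
    rw [key α hconj hfix j _ (fun i hi => (Finset.mem_erase.1 hi).1) hc k]
    by_cases hk : k = j
    · subst hk
      simp [MulAut.conj_apply]
    · simp [Finset.mem_erase, hk, MulAut.conj_apply]
  refine ⟨comm j, prod j, ?_⟩
  intro g
  set S := {β : MulAut (FreeGroup (Fin n)) | ∃ i k : Fin n, i ≠ k ∧ β = α i k}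
  have hgen : ∀ j : Fin n, MulAut.conj (FreeGroup.of j) ∈ Subgroup.closure S := by
    intro j
    have hc : (↑(Finset.univ.erase j) : Set (Fin n)).Pairwise
        fun a b => Commute (α a j) (α b j) := by
      intro a ha b hb _
      exact comm j a b (Finset.mem_erase.1 ha).1 (Finset.mem_erase.1 hb).1
    rw [← prod j hc]
    apply Subgroup.noncommProd_mem
    intro i hi
    exact Subgroup.subset_closure ⟨i, j, (Finset.mem_erase.1 hi).1, rfl⟩
  induction g using FreeGroup.induction_on with
  | C1 => rw [_root_.map_one]; exact Subgroup.one_mem _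
  | of i => exact hgen i
  | inv_of i _ => rw [_root_.map_inv]; exact Subgroup.inv_mem _ (hgen i)
  | mul x y hx hy => rw [_root_.map_mul]; exact Subgroup.mul_mem _ hx hy
end

section
/- In Aut(F_n), for all indices with 1 ≤ i < j < p ≤ n and i + 1 ≤ q ≤ n one has the conjugation identity α_{j,p}^{-1} α_{i,q} α_{j,p} = α_{i,p} α_{i,q} α_{i,p}^{-1} if q = j, and α_{j,p}^{-1} α_{i,q} α_{j,p} = α_{i,q} if q ≠ j. -/
private lemma mulAut_freeGroup_ext {β : Type*} (e f : MulAut (FreeGroup β))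
    (h : ∀ a, e (FreeGroup.of a) = f (FreeGroup.of a)) : e = f := by
  apply MulEquiv.toMonoidHom_injective
  exact FreeGroup.ext_hom _ _ h

/-- In `Aut(F_n)`, for indices `i < j < p` and `i < q` (i.e. `i+1 ≤ q`), one has
`α j p ⁻¹ * α i q * α j p = α i p * α i q * (α i p)⁻¹` if `q = j`, and
`α j p ⁻¹ * α i q * α j p = α i q` if `q ≠ j`. -/
theorem conjugation_action_identity (n : ℕ) (hn : 2 ≤ n)
    (α : Fin n → Fin n → MulAut (FreeGroup (Fin n)))
    (hconj : ∀ i j : Fin n, i ≠ j →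
      α i j (FreeGroup.of i) = FreeGroup.of j * FreeGroup.of i * (FreeGroup.of j)⁻¹)
    (hfix : ∀ i j k : Fin n, i ≠ j → k ≠ i → α i j (FreeGroup.of k) = FreeGroup.of k)
    (i j p q : Fin n) (hij : i < j) (hjp : j < p) (hiq : i < q) :
    (q = j → (α j p)⁻¹ * α i q * α j p = α i p * α i q * (α i p)⁻¹) ∧
    (q ≠ j → (α j p)⁻¹ * α i q * α j p = α i q) := by
  have hijne : i ≠ j := hij.ne
  have hjine : j ≠ i := hij.ne'
  have hjpne : j ≠ p := hjp.ne
  have hpjne : p ≠ j := hjp.ne'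
  have hipne : i ≠ p := (hij.trans hjp).ne
  have hpine : p ≠ i := (hij.trans hjp).ne'
  have hiqne : i ≠ q := hiq.ne
  have hqine : q ≠ i := hiq.ne'
  have E1 : α i j * α j p * α i p = α j p * α i p * α i j := by
    apply mulAut_freeGroup_ext
    intro a
    simp only [MulAut.mul_apply]
    by_cases hai : a = i
    · rw [hai]
      simp only [hconj i p hipne, hconj i j hijne, map_mul, map_inv,
        hfix j p p hjpne hpjne, hfix j p i hjpne hijne,
        hfix i j p hijne hpine, hfix i p j hipne hjine,
        hconj j p hjpne]
      group
    · by_cases haj : a = j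
      · rw [haj]
        simp only [hfix i p j hipne hjine, hconj j p hjpne, map_mul, map_inv,
          hfix i j p hijne hpine, hfix i j j hijne hjine]
      · simp only [hfix i p a hipne hai, hfix j p a hjpne haj, hfix i j a hijne hai]
  have E2 : q ≠ j → α i q * α j p = α j p * α i q := by
    intro hqj
    apply mulAut_freeGroup_ext
    intro a
    simp only [MulAut.mul_apply]
    by_cases hai : a = i
    · rw [hai]
      simp only [hfix j p i hjpne hijne, hconj i q hiqne, map_mul, map_inv,
        hfix j p q hjpne hqj, hfix j p i hjpne hijne]
    · by_cases haj : a = j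
      · rw [haj]
        simp only [hconj j p hjpne, hfix i q j hiqne hjine, map_mul, map_inv,
          hfix i q p hiqne hpine]
      · simp only [hfix j p a hjpne haj, hfix i q a hiqne hai]
  constructor
  · rintro rfl
    calc (α q p)⁻¹ * α i q * α q p
        = (α q p)⁻¹ * (α i q * α q p * α i p) * (α i p)⁻¹ := by group
      _ = (α q p)⁻¹ * (α q p * α i p * α i q) * (α i p)⁻¹ := by rw [E1]
      _ = α i p * α i q * (α i p)⁻¹ := by group
  · intro hqj
    calc (α j p)⁻¹ * α i q * α j p
        = (α j p)⁻¹ * (α i q * α j p) := by group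
      _ = (α j p)⁻¹ * (α j p * α i q) := by rw [E2 hqj]
      _ = α i q := by group
end

section
/- The element c = α_{1,n} α_{2,n} ⋯ α_{n-1,n} of Aut(F_n) commutes with every generator α_{i,j} with 1 ≤ i < j ≤ n; consequently c lies in the center of the upper triangular McCool group PΣ_n^+. -/
/-- The element `c = α_{1,n} α_{2,n} ⋯ α_{n-1,n}` of `Aut(F_n)`. -/
def cAut (n : ℕ) (hn : 2 ≤ n) (α : Fin n → Fin n → MulAut (FreeGroup (Fin n))) :
    MulAut (FreeGroup (Fin n)) :=
  ((List.finRange (n - 1)).map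
    (fun i => α (Fin.castLE (Nat.sub_le n 1) i) ⟨n - 1, by omega⟩)).prod

/-- The upper triangular McCool group `PΣ_n⁺`, the subgroup of `Aut(F_n)` generated by
the `α i j` with `i < j`. -/
def McCoolPlus (n : ℕ) (α : Fin n → Fin n → MulAut (FreeGroup (Fin n))) :
    Subgroup (MulAut (FreeGroup (Fin n))) :=
  Subgroup.closure {β : MulAut (FreeGroup (Fin n)) | ∃ i j : Fin n, i < j ∧ β = α i j}

/-- The element `c = α_{1,n} α_{2,n} ⋯ α_{n-1,n}` commutes with every generator
`α i j` with `i < j`; consequently `c` lies in the center of the upper triangular McCool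
group `PΣ_n⁺`. -/
theorem c_is_central (n : ℕ) (hn : 2 ≤ n)
    (α : Fin n → Fin n → MulAut (FreeGroup (Fin n)))
    (hconj : ∀ i j : Fin n, i ≠ j →
      α i j (FreeGroup.of i) = FreeGroup.of j * FreeGroup.of i * (FreeGroup.of j)⁻¹)
    (hfix : ∀ i j k : Fin n, i ≠ j → k ≠ i → α i j (FreeGroup.of k) = FreeGroup.of k) :
    (∀ i j : Fin n, i < j → Commute (cAut n hn α) (α i j)) ∧
    ∃ hc : cAut n hn α ∈ McCoolPlus n α,
      (⟨cAut n hn α, hc⟩ : McCoolPlus n α) ∈ Subgroup.center (McCoolPlus n α) := by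
  set m : Fin n := ⟨n - 1, by omega⟩ with hm
  set f : Fin (n - 1) → MulAut (FreeGroup (Fin n)) :=
    fun i => α (Fin.castLE (Nat.sub_le n 1) i) m with hf
  have hcastne : ∀ i : Fin (n - 1), (Fin.castLE (Nat.sub_le n 1) i) ≠ m := by
    intro i h
    have h2 : (Fin.castLE (Nat.sub_le n 1) i : Fin n).val = m.val := congrArg Fin.val h
    have h3 : i.val < n - 1 := i.isLt
    simp [hm] at h2
    omega
  -- a list of generators all of whose indices avoid k fixes `of k`
  have hfixl : ∀ (l : List (Fin (n - 1))) (k : Fin n),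
      (∀ i ∈ l, Fin.castLE (Nat.sub_le n 1) i ≠ k) →
      ((l.map f).prod : MulAut (FreeGroup (Fin n))) (FreeGroup.of k) = FreeGroup.of k := by
    intro l
    induction l with
    | nil => intro k _; simp
    | cons a t ih =>
      intro k h
      simp only [List.map_cons, List.prod_cons, MulAut.mul_apply]
      rw [ih k (fun i hi => h i (List.mem_cons_of_mem a hi))]
      exact hfix _ _ _ (hcastne a) (Ne.symm (h a List.mem_cons_self))
  have hmain : ∀ (l : List (Fin (n - 1))), l.Nodup → ∀ (k : Fin n) (i : Fin (n - 1)),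
      i ∈ l → Fin.castLE (Nat.sub_le n 1) i = k →
      ((l.map f).prod : MulAut (FreeGroup (Fin n))) (FreeGroup.of k) =
        FreeGroup.of m * FreeGroup.of k * (FreeGroup.of m)⁻¹ := by
    intro l
    induction l with
    | nil => intro _ k i hi; exact absurd hi List.not_mem_nil
    | cons a t ih =>
      intro hnd k i hi hik
      obtain ⟨hat, hndt⟩ := List.nodup_cons.mp hnd
      simp only [List.map_cons, List.prod_cons, MulAut.mul_apply]
      rcases List.mem_cons.mp hi with rfl | hit
      · rw [hfixl t k ?_]
        · rw [← hik]
          exact hconj _ _ (hcastne i)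
        · intro j hj hje
          have : j = i := Fin.castLE_injective _ (hje.trans hik.symm)
          exact hat (this ▸ hj)
      · rw [ih hndt k i hit hik]
        have hak : Fin.castLE (Nat.sub_le n 1) a ≠ k := by
          intro h
          exact hat ((Fin.castLE_injective _ (h.trans hik.symm)) ▸ hit)
        have h1 : (f a) (FreeGroup.of m) = FreeGroup.of m :=
          hfix _ _ _ (hcastne a) (Ne.symm (hcastne a))
        have h2 : (f a) (FreeGroup.of k) = FreeGroup.of k :=
          hfix _ _ _ (hcastne a) (Ne.symm hak)
        simp [map_mul, map_inv, h1, h2]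
  have key : ∀ k : Fin n, cAut n hn α (FreeGroup.of k) =
      FreeGroup.of m * FreeGroup.of k * (FreeGroup.of m)⁻¹ := by
    intro k
    show ((List.finRange (n - 1)).map f).prod (FreeGroup.of k) = _
    by_cases hk : k = m
    · subst hk
      rw [hfixl _ _ (fun i _ => hcastne i)]
      simp
    · have hkv : k.val < n - 1 := by
        have : k.val < n := k.isLt
        have : k.val ≠ n - 1 := fun h => hk (Fin.ext (by simp [hm, h]))
        omega
      exact hmain _ (List.nodup_finRange _) k ⟨k.val, hkv⟩
        (List.mem_finRange _) (Fin.ext rfl)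
  -- c is conjugation by `of m`
  have hc_eq : cAut n hn α = MulAut.conj (FreeGroup.of m) := by
    apply MulEquiv.toMonoidHom_injective
    apply FreeGroup.ext_hom
    intro k
    simp [key k, MulAut.conj_apply]
  have hcomm : ∀ i j : Fin n, i < j → Commute (cAut n hn α) (α i j) := by
    intro i j hij
    have him : i ≠ m := by
      intro h
      have h1 : i.val < j.val := hij
      have h2 : j.val < n := j.isLt
      have h3 : i.val = n - 1 := congrArg Fin.val h
      omega
    have hβm : α i j (FreeGroup.of m) = FreeGroup.of m :=
      hfix i j m (Fin.ne_of_lt hij) (Ne.symm him)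
    rw [hc_eq]
    show _ = _
    apply MulEquiv.ext
    intro x
    simp only [MulAut.mul_apply, MulAut.conj_apply, map_mul, map_inv, hβm]
  refine ⟨hcomm, ?_, ?_⟩
  · apply Subgroup.list_prod_mem
    intro x hx
    rcases List.mem_map.mp hx with ⟨i, _, rfl⟩
    apply Subgroup.subset_closure
    refine ⟨Fin.castLE (Nat.sub_le n 1) i, m, ?_, rfl⟩
    have h1 : i.val < n - 1 := i.isLt
    have h2 : ((Fin.castLE (Nat.sub_le n 1) i : Fin n)).val = i.val := rfl
    have h3 : m.val = n - 1 := rfl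
    exact Fin.lt_def.mpr (by omega)
  · rw [Subgroup.mem_center_iff]
    intro g
    apply Subtype.ext
    show (g : MulAut (FreeGroup (Fin n))) * cAut n hn α = cAut n hn α * g
    have hg : (g : MulAut (FreeGroup (Fin n))) ∈
        Subgroup.closure {β : MulAut (FreeGroup (Fin n)) | ∃ i j : Fin n, i < j ∧ β = α i j} :=
      g.2
    refine Subgroup.closure_induction ?_ ?_ ?_ ?_ hg
    · rintro x ⟨i, j, hij, rfl⟩
      exact (hcomm i j hij).symm
    · exact Commute.one_left _
    · intro a b _ _ ha hb; exact Commute.mul_left ha hb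
    · intro a _ ha; exact Commute.inv_left ha
end

section
/- The center of the upper triangular McCool group PΣ_n^+ is the infinite cyclic subgroup generated by c = α_{1,n} α_{2,n} ⋯ α_{n-1,n}; that is, Z(PΣ_n^+) = ⟨c⟩ and ⟨c⟩ ≅ ℤ. -/
open FreeGroup

variable {α : Type*} [DecidableEq α]

lemma invRev_cons (a : α × Bool) (M : List (α × Bool)) :
    invRev (a :: M) = invRev M ++ [(a.1, !a.2)] := by
  simp [invRev]

lemma strip_head (x : α) (b : Bool) (g : FreeGroup α) {tl : List (α × Bool)}
    (h : g.toWord = (x, b) :: tl) :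
    (FreeGroup.mk [(x, !b)] * g).toWord = tl := by
  conv_lhs => rw [← FreeGroup.mk_toWord (x := g)]
  rw [FreeGroup.mul_mk, FreeGroup.toWord_mk, List.singleton_append, FreeGroup.reduce.cons,
    FreeGroup.reduce_toWord, h]
  simp

lemma cons_noncancel (x : α) (b : Bool) (g : FreeGroup α)
    (h : ∀ tl, g.toWord ≠ (x, !b) :: tl) :
    (FreeGroup.mk [(x, b)] * g).toWord = (x, b) :: g.toWord := by
  conv_lhs => rw [← FreeGroup.mk_toWord (x := g)]
  rw [FreeGroup.mul_mk, FreeGroup.toWord_mk, List.singleton_append, FreeGroup.reduce.cons,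
    FreeGroup.reduce_toWord]
  rcases hg : g.toWord with _ | ⟨⟨y, c⟩, tl⟩
  · rfl
  · have : ¬(x = y ∧ b = !c) := by
      rintro ⟨rfl, rfl⟩
      exact h tl (by simpa using hg)
    simp [this]

lemma mk_single_true (x : α) : FreeGroup.mk [(x, true)] = FreeGroup.of x := rfl

lemma mk_single_false (x : α) : FreeGroup.mk [(x, false)] = (FreeGroup.of x)⁻¹ := by
  rw [← mk_single_true, FreeGroup.inv_mk]
  simp [invRev]

/-- centralizer of a generator in a free group -/
theorem commute_of_eq_zpow (x : α) (g : FreeGroup α)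
    (h : Commute g (FreeGroup.of x)) : ∃ m : ℤ, g = FreeGroup.of x ^ m := by
  generalize hn : g.toWord.length = N
  induction N using Nat.strong_induction_on generalizing g with
  | _ N ih =>
  rcases hL : g.toWord with _ | ⟨⟨y, b⟩, tl⟩
  · exact ⟨0, by rw [← FreeGroup.mk_toWord (x := g), hL]; rfl⟩
  -- helper to strip a leading x-letter
  have strip : ∀ (g' : FreeGroup α) (b' : Bool) (tl' : List (α × Bool)),
      g'.toWord = (x, b') :: tl' → Commute g' (FreeGroup.of x) →
      g'.toWord.length = N → ∃ m : ℤ, g' = FreeGroup.of x ^ m := by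
    intro g' b' tl' hL' hc' hn'
    have h1 : (FreeGroup.mk [(x, !b')] * g').toWord = tl' := strip_head x b' g' hL'
    have hlen : tl'.length < N := by
      rw [← hn', hL']; simp
    have hc2 : Commute (FreeGroup.mk [(x, !b')] * g') (FreeGroup.of x) := by
      cases b'
      · simpa [mk_single_true] using (Commute.refl (FreeGroup.of x)).mul_left hc'
      · simpa [mk_single_false] using ((Commute.refl (FreeGroup.of x)).inv_left).mul_left hc'
    obtain ⟨m, hm⟩ := ih tl'.length hlen _ hc2 (by rw [h1])
    refine ⟨(if b' then 1 else -1) + m, ?_⟩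
    have : g' = (FreeGroup.mk [(x, !b')])⁻¹ * (FreeGroup.of x ^ m) := by
      rw [← hm]; group
    rw [this]
    cases b' <;> simp [mk_single_true, mk_single_false, zpow_add] <;> group
  by_cases hyx : y = x
  · exact strip g b tl (by rw [hL, hyx]) h hn
  · -- look at the head of g⁻¹
    rcases hL' : (g⁻¹).toWord with _ | ⟨⟨z, c⟩, tl'⟩
    · have : g⁻¹ = 1 := by rwa [← FreeGroup.toWord_eq_nil_iff]
      exact ⟨0, by simpa using congrArg (·⁻¹) this⟩
    by_cases hzx : z = x
    · have hlen' : (g⁻¹).toWord.length = N := by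
        rw [FreeGroup.toWord_inv, FreeGroup.invRev_length, hn]
      obtain ⟨m, hm⟩ := strip g⁻¹ c tl' (by rw [hL', hzx]) h.inv_left hlen'
      exact ⟨-m, by rw [← inv_inv g, hm]; group⟩
    · -- contradiction case
      exfalso
      have h1 : (FreeGroup.of x * g).toWord = (x, true) :: g.toWord := by
        rw [← mk_single_true]
        refine cons_noncancel x true g ?_
        intro t ht
        rw [hL] at ht
        simp at ht
        exact hyx ht.1.1
      have h2 : ((FreeGroup.of x)⁻¹ * g⁻¹).toWord = (x, false) :: (g⁻¹).toWord := by
        rw [← mk_single_false]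
        refine cons_noncancel x false g⁻¹ ?_
        intro t ht
        rw [hL'] at ht
        simp at ht
        exact hzx ht.1.1
      have key : (g * FreeGroup.of x).toWord = g.toWord ++ [(x, true)] := by
        have : g * FreeGroup.of x = ((FreeGroup.of x)⁻¹ * g⁻¹)⁻¹ := by group
        rw [this, FreeGroup.toWord_inv, h2, invRev_cons, FreeGroup.toWord_inv,
          FreeGroup.invRev_invRev]
        simp [invRev]
      have heq : (x, true) :: g.toWord = g.toWord ++ [(x, true)] := by
        rw [← key, ← h1, h.eq]
      have := congrArg List.head? heq
      rw [hL] at this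
      simp at this
      exact hyx this.1.symm

/-- exponent sum of generator `k` -/
def expSum (k : α) : FreeGroup α →* Multiplicative ℤ :=
  FreeGroup.lift (fun m => Multiplicative.ofAdd (if m = k then (1 : ℤ) else 0))

@[simp] lemma expSum_of_self (k : α) : expSum k (FreeGroup.of k) = Multiplicative.ofAdd 1 := by
  simp [expSum]

lemma expSum_of_ne (k m : α) (h : m ≠ k) : expSum k (FreeGroup.of m) = 1 := by
  simp [expSum, h]

lemma expSum_zpow_self (k : α) (s : ℤ) :
    expSum k (FreeGroup.of k ^ s) = Multiplicative.ofAdd s := by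
  rw [map_zpow, expSum_of_self]
  rw [← ofAdd_zsmul]
  norm_num

lemma expSum_zpow_ne (k m : α) (h : m ≠ k) (s : ℤ) : expSum k (FreeGroup.of m ^ s) = 1 := by
  rw [map_zpow, expSum_of_ne k m h, one_zpow]

/-- if `g` commutes with `of x` and has zero `x`-exponent sum, it is trivial -/
theorem eq_one_of_commute_of_expSum (x : α) (g : FreeGroup α) (h : Commute g (FreeGroup.of x))
    (h0 : expSum x g = 1) : g = 1 := by
  obtain ⟨m, hm⟩ := commute_of_eq_zpow x g h
  rw [hm, expSum_zpow_self] at h0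
  have : m = 0 := by
    have := congrArg Multiplicative.toAdd h0
    simpa using this
  rw [hm, this, zpow_zero]

/-- a nontrivial power of `of y` cannot commute with `of x` for `y ≠ x` -/
theorem zpow_commute_ne (x y : α) (hxy : y ≠ x) (a : ℤ)
    (h : Commute (FreeGroup.of y ^ a) (FreeGroup.of x)) : a = 0 := by
  obtain ⟨m, hm⟩ := commute_of_eq_zpow x _ h
  have := congrArg (expSum y) hm
  rw [expSum_zpow_self, expSum_zpow_ne y x (fun hh => hxy hh.symm)] at this
  simpa using this


/-- the top index `n-1` -/
def tIdx (n : ℕ) (hn : 2 ≤ n) : Fin n := ⟨n - 1, by omega⟩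

lemma ne_tIdx_iff {n : ℕ} (hn : 2 ≤ n) (k : Fin n) : k ≠ tIdx n hn ↔ (k : ℕ) < n - 1 := by
  constructor
  · intro h
    have : (k : ℕ) ≠ n - 1 := fun hh => h (Fin.ext hh)
    have := k.isLt
    omega
  · intro h hk
    rw [hk] at h
    simp [tIdx] at h

/-- two automorphisms of a free group agreeing on generators are equal -/
lemma mulAut_ext {β : Type*} (f g : MulAut (FreeGroup β))
    (h : ∀ x, f (FreeGroup.of x) = g (FreeGroup.of x)) : f = g := by
  have := FreeGroup.ext_hom (f : FreeGroup β →* FreeGroup β) (g : FreeGroup β →* FreeGroup β) h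
  ext x
  exact congrArg (fun (φ : FreeGroup β →* FreeGroup β) => φ x) this

section McCool

variable {n : ℕ} (hn : 2 ≤ n) (α : Fin n → Fin n → MulAut (FreeGroup (Fin n)))
  (hconj : ∀ i j : Fin n, i ≠ j →
    α i j (FreeGroup.of i) = FreeGroup.of j * FreeGroup.of i * (FreeGroup.of j)⁻¹)
  (hfix : ∀ i j k : Fin n, i ≠ j → k ≠ i → α i j (FreeGroup.of k) = FreeGroup.of k)

include hn hconj hfix

local notation "F" => FreeGroup (Fin n)

/-- applying a product of `α i t`'s to a generator -/
lemma listProd_apply (L : List (Fin n)) (hnd : L.Nodup)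
    (hLt : ∀ a ∈ L, a ≠ tIdx n hn) (k : Fin n) :
    ((L.map (fun i => α i (tIdx n hn))).prod) (FreeGroup.of k) =
      if k ∈ L then FreeGroup.of (tIdx n hn) * FreeGroup.of k * (FreeGroup.of (tIdx n hn))⁻¹
        else FreeGroup.of k := by
  induction L with
  | nil => simp
  | cons a L ih =>
    have hand : L.Nodup := (List.nodup_cons.mp hnd).2
    have haL : a ∉ L := (List.nodup_cons.mp hnd).1
    have hat : a ≠ tIdx n hn := hLt a List.mem_cons_self
    have hLt' : ∀ b ∈ L, b ≠ tIdx n hn := fun b hb => hLt b (List.mem_cons_of_mem a hb)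
    rw [List.map_cons, List.prod_cons, MulAut.mul_apply, ih hand hLt']
    by_cases hkL : k ∈ L
    · have hka : k ≠ a := fun h => haL (h ▸ hkL)
      simp only [hkL, if_pos, List.mem_cons, or_true, if_true]
      rw [MulEquiv.map_mul, MulEquiv.map_mul, MulEquiv.map_inv]
      rw [hfix a (tIdx n hn) (tIdx n hn) hat (Ne.symm hat),
        hfix a (tIdx n hn) k hat hka]
    · by_cases hka : k = a
      · subst hka
        simp only [hkL, if_neg, not_false_iff]
        rw [hconj k (tIdx n hn) hat]
        simp
      · simp only [hkL, if_neg, not_false_iff]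
        rw [hfix a (tIdx n hn) k hat (fun h => hka h)]
        simp [hkL, hka]

lemma cAut_eq_conj : cAut n hn α = MulAut.conj (FreeGroup.of (tIdx n hn)) := by
  apply mulAut_ext
  intro k
  have h1 : cAut n hn α =
      (((List.finRange (n - 1)).map (Fin.castLE (Nat.sub_le n 1))).map
        (fun i => α i (tIdx n hn))).prod := by
    rw [cAut, List.map_map]
    rfl
  have hnd : ((List.finRange (n - 1)).map (Fin.castLE (Nat.sub_le n 1))).Nodup :=
    (List.nodup_finRange _).map (Fin.castLE_injective _)
  have hLt : ∀ a ∈ (List.finRange (n - 1)).map (Fin.castLE (Nat.sub_le n 1)),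
      a ≠ tIdx n hn := by
    intro a ha
    rw [List.mem_map] at ha
    obtain ⟨i, _, rfl⟩ := ha
    rw [ne_tIdx_iff hn]
    exact i.isLt
  rw [h1, listProd_apply hn α hconj hfix _ hnd hLt k, MulAut.conj_apply]
  by_cases hk : k ∈ (List.finRange (n - 1)).map (Fin.castLE (Nat.sub_le n 1))
  · simp [hk]
  · have hkt : k = tIdx n hn := by
      by_contra hne
      apply hk
      rw [List.mem_map]
      have hlt : (k : ℕ) < n - 1 := (ne_tIdx_iff hn k).mp hne
      exact ⟨⟨(k : ℕ), hlt⟩, List.mem_finRange _, by ext; simp⟩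
    subst hkt
    simp [hk]

lemma cAut_mem : cAut n hn α ∈ McCoolPlus n α := by
  rw [cAut]
  apply Subgroup.list_prod_mem
  intro x hx
  rw [List.mem_map] at hx
  obtain ⟨i, _, rfl⟩ := hx
  apply Subgroup.subset_closure
  exact ⟨_, _, by simp [Fin.lt_def, i.isLt], rfl⟩

omit hn hconj hfix in
lemma fixes_top_of_mem {β : MulAut F} (hβ : β ∈ McCoolPlus n α)
    (hfix' : ∀ i j k : Fin n, i ≠ j → k ≠ i → α i j (FreeGroup.of k) = FreeGroup.of k)
    (hn' : 2 ≤ n) :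
    β (FreeGroup.of (tIdx n hn')) = FreeGroup.of (tIdx n hn') := by
  induction hβ using Subgroup.closure_induction with
  | mem x hx =>
    obtain ⟨i, j, hij, rfl⟩ := hx
    apply hfix' i j _ (Fin.ne_of_lt hij)
    refine Ne.symm ?_
    rw [ne_tIdx_iff hn']
    have := j.isLt
    have := hij
    rw [Fin.lt_def] at this
    omega
  | one => simp
  | mul x y hx hy ihx ihy => rw [MulAut.mul_apply, ihy, ihx]
  | inv x hx ihx =>
    have : x (x⁻¹ (FreeGroup.of (tIdx n hn'))) = x (FreeGroup.of (tIdx n hn')) := by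
      simp [ihx]
    simpa using (x.injective (by simpa using this))

omit hn hconj hfix in
lemma fixes_top_of_mem' {β : MulAut F} (hβ : β ∈ McCoolPlus n α)
    (hfix' : ∀ i j k : Fin n, i ≠ j → k ≠ i → α i j (FreeGroup.of k) = FreeGroup.of k)
    (hn' : 2 ≤ n) :
    β⁻¹ (FreeGroup.of (tIdx n hn')) = FreeGroup.of (tIdx n hn') :=
  fixes_top_of_mem α (inv_mem hβ) hfix' hn'

/-- the subgroup generated by the generators above `k` -/
def Hsub (n : ℕ) (k : Fin n) : Subgroup (FreeGroup (Fin n)) :=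
  Subgroup.closure (FreeGroup.of '' {m : Fin n | k < m})

omit hn hconj hfix in
lemma Hsub_mono {k k' : Fin n} (h : k ≤ k') : Hsub n k' ≤ Hsub n k := by
  apply Subgroup.closure_mono
  apply Set.image_mono
  intro m hm
  exact lt_of_le_of_lt h hm

omit hn hconj hfix in
lemma maps_Hsub {β : MulAut F}
    (hβ : ∀ m : Fin n, ∃ w ∈ Hsub n m, β (FreeGroup.of m) = w * FreeGroup.of m * w⁻¹)
    (k : Fin n) : ∀ g ∈ Hsub n k, β g ∈ Hsub n k := by
  intro g hg
  induction hg using Subgroup.closure_induction with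
  | mem x hx =>
    obtain ⟨m, hm, rfl⟩ := hx
    obtain ⟨w, hw, hww⟩ := hβ m
    rw [hww]
    have hwk : w ∈ Hsub n k := Hsub_mono (le_of_lt hm) hw
    exact mul_mem (mul_mem hwk (Subgroup.subset_closure ⟨m, hm, rfl⟩)) (inv_mem hwk)
  | one => simp [one_mem]
  | mul x y hx hy ihx ihy => rw [MulEquiv.map_mul]; exact mul_mem ihx ihy
  | inv x hx ihx => rw [MulEquiv.map_inv]; exact inv_mem ihx

/-- the subgroup of upper-triangular basis-conjugating automorphisms -/
def Qsub (n : ℕ) : Subgroup (MulAut (FreeGroup (Fin n))) where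
  carrier := {β | ∀ k : Fin n,
    (∃ w ∈ Hsub n k, β (FreeGroup.of k) = w * FreeGroup.of k * w⁻¹) ∧
    (∃ w ∈ Hsub n k, β⁻¹ (FreeGroup.of k) = w * FreeGroup.of k * w⁻¹)}
  one_mem' := fun k => ⟨⟨1, one_mem _, by simp⟩, ⟨1, one_mem _, by simp⟩⟩
  mul_mem' := by
    intro a b ha hb
    intro k
    constructor
    · obtain ⟨w, hw, hww⟩ := (hb k).1
      obtain ⟨v, hv, hvv⟩ := (ha k).1
      refine ⟨a w * v, mul_mem (maps_Hsub (fun m => (ha m).1) k w hw) hv, ?_⟩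
      rw [MulAut.mul_apply, hww, MulEquiv.map_mul, MulEquiv.map_mul, MulEquiv.map_inv, hvv]
      group
    · obtain ⟨w, hw, hww⟩ := (hb k).2
      obtain ⟨v, hv, hvv⟩ := (ha k).2
      refine ⟨b⁻¹ v * w, mul_mem (maps_Hsub (fun m => (hb m).2) k v hv) hw, ?_⟩
      rw [mul_inv_rev, MulAut.mul_apply, hvv, MulEquiv.map_mul, MulEquiv.map_mul,
        MulEquiv.map_inv, hww]
      group
  inv_mem' := by
    intro a ha k
    exact ⟨(ha k).2, by simpa using (ha k).1⟩

omit hn in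
lemma McCoolPlus_le_Qsub : McCoolPlus n α ≤ Qsub n := by
  rw [McCoolPlus]
  apply Subgroup.closure_le _ |>.mpr
  rintro β ⟨i, j, hij, rfl⟩
  intro k
  have hij' : i ≠ j := Fin.ne_of_lt hij
  by_cases hk : k = i
  · subst hk
    constructor
    · refine ⟨FreeGroup.of j, Subgroup.subset_closure ⟨j, hij, rfl⟩, ?_⟩
      exact hconj k j hij'
    · refine ⟨(FreeGroup.of j)⁻¹, inv_mem (Subgroup.subset_closure ⟨j, hij, rfl⟩), ?_⟩
      have key : α k j ((FreeGroup.of j)⁻¹ * FreeGroup.of k * FreeGroup.of j)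
          = FreeGroup.of k := by
        rw [MulEquiv.map_mul, MulEquiv.map_mul, MulEquiv.map_inv, hconj k j hij',
          hfix k j j hij' (Ne.symm hij')]
        group
      rw [MulAut.inv_def, inv_inv]
      conv_lhs => rw [← key]
      exact (α k j).symm_apply_apply _
  · constructor
    · exact ⟨1, one_mem _, by rw [hfix i j k hij' hk]; group⟩
    · refine ⟨1, one_mem _, ?_⟩
      have : α i j (FreeGroup.of k) = FreeGroup.of k := hfix i j k hij' hk
      have h2 : (α i j)⁻¹ (FreeGroup.of k) = FreeGroup.of k := by
        rw [MulAut.inv_def]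
        conv_lhs => rw [← this]
        exact (α i j).symm_apply_apply _
      rw [h2]; group

omit hn hfix in
lemma expSum_alpha (i j : Fin n) (hij : i ≠ j) (k : Fin n) (g : F)
    (hfix' : ∀ i j k : Fin n, i ≠ j → k ≠ i → α i j (FreeGroup.of k) = FreeGroup.of k) :
    expSum k (α i j g) = expSum k g := by
  have h := FreeGroup.ext_hom ((expSum k).comp (MulEquiv.toMonoidHom (α i j))) (expSum k) ?_
  · exact congrArg (fun (φ : FreeGroup (Fin n) →* Multiplicative ℤ) => φ g) h
  · intro a
    simp only [MonoidHom.comp_apply, MulEquiv.coe_toMonoidHom]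
    by_cases ha : a = i
    · subst ha
      rw [hconj a j hij, _root_.map_mul, _root_.map_mul, _root_.map_inv,
        mul_comm (expSum k (FreeGroup.of j)) (expSum k (FreeGroup.of a)), mul_inv_cancel_right]
    · rw [hfix' i j a hij ha]

lemma central_mem_zpowers (z : MulAut F) (hz : z ∈ McCoolPlus n α)
    (hcm : ∀ β, β ∈ McCoolPlus n α → β * z = z * β) :
    ∃ M : ℤ, z = cAut n hn α ^ M := by
  set t := tIdx n hn with ht
  set N := FreeGroup.of t with hN
  have hQ := McCoolPlus_le_Qsub α hconj hfix hz
  choose w hwH hw using fun k => (hQ k).1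
  have FactA : ∀ i j k : Fin n, i < j → k ≠ i →
      α i j (z (FreeGroup.of k)) = z (FreeGroup.of k) := by
    intro i j k hij hk
    have h1 := hcm (α i j) (Subgroup.subset_closure ⟨i, j, hij, rfl⟩)
    have h2 := congrArg (fun (β : MulAut (FreeGroup (Fin n))) => β (FreeGroup.of k)) h1
    simp only [MulAut.mul_apply] at h2
    rwa [hfix i j k (Fin.ne_of_lt hij) hk] at h2
  have FactB : ∀ i j k : Fin n, i < j → k ≠ i → α i j (w k) = w k := by
    intro i j k hij hk
    have hij' : i ≠ j := Fin.ne_of_lt hij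
    have e1 : α i j (w k) * FreeGroup.of k * (α i j (w k))⁻¹
        = w k * FreeGroup.of k * (w k)⁻¹ := by
      have := FactA i j k hij hk
      rw [hw k] at this
      rwa [MulEquiv.map_mul, MulEquiv.map_mul, MulEquiv.map_inv,
        hfix i j k hij' hk] at this
    have hcu : ((w k)⁻¹ * α i j (w k)) * FreeGroup.of k
        = FreeGroup.of k * ((w k)⁻¹ * α i j (w k)) := by
      have step : ((w k)⁻¹ * α i j (w k)) * FreeGroup.of k
          = (w k)⁻¹ * (α i j (w k) * FreeGroup.of k * (α i j (w k))⁻¹) * (α i j (w k)) := by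
        group
      rw [step, e1]
      group
    have hexp : expSum k ((w k)⁻¹ * α i j (w k)) = 1 := by
      rw [_root_.map_mul, _root_.map_inv, expSum_alpha α hconj i j hij' k (w k) hfix, inv_mul_cancel]
    have := eq_one_of_commute_of_expSum k _ hcu hexp
    exact (inv_mul_eq_one.mp this).symm
  have FactC : ∀ k : Fin n, ∃ mk : ℤ, w k = N ^ mk := by
    intro k
    by_cases hkt : k = t
    · refine ⟨0, ?_⟩
      have hset : {m : Fin n | t < m} = ∅ := by
        ext m
        simp only [Set.mem_setOf_eq, Set.mem_empty_iff_false, iff_false]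
        rw [Fin.lt_def]
        have := m.isLt
        simp only [ht, tIdx]
        omega
      have hbot : Hsub n t = ⊥ := by
        rw [Hsub, hset, Set.image_empty, Subgroup.closure_empty]
      have : w k ∈ (⊥ : Subgroup (FreeGroup (Fin n))) := by
        rw [← hbot, hkt] at *
        exact hwH _
      rw [Subgroup.mem_bot] at this
      rw [this, zpow_zero]
    · set L := (List.finRange n).filter (fun i => decide (k < i ∧ i ≠ t)) with hL
      have hmemL : ∀ i : Fin n, i ∈ L ↔ (k < i ∧ i ≠ t) := by
        intro i
        simp [hL, List.mem_filter]
      have hnd : L.Nodup := (List.nodup_finRange n).filter _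
      have hLt : ∀ a ∈ L, a ≠ t := fun a ha => ((hmemL a).mp ha).2
      have happ := listProd_apply hn α hconj hfix L hnd hLt
      set β := (L.map (fun i => α i t)).prod with hβ
      have hβH : β (w k) = N * w k * N⁻¹ := by
        have hwk' : w k ∈ Subgroup.closure (FreeGroup.of '' {m : Fin n | k < m}) := hwH k
        refine Subgroup.closure_induction (p := fun g _ => β g = N * g * N⁻¹)
          ?_ ?_ ?_ ?_ hwk'
        · rintro x ⟨mg, hmg, rfl⟩
          by_cases hmt : mg = t
          · rw [happ mg, if_neg (fun hc => ((hmemL mg).mp hc).2 hmt), hmt, ← hN]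
            group
          · rw [happ mg, if_pos ((hmemL mg).mpr ⟨hmg, hmt⟩)]
        · simp only [_root_.map_one]; group
        · intro x y hx hy ihx ihy
          rw [MulEquiv.map_mul, ihx, ihy]; group
        · intro x hx ihx
          rw [MulEquiv.map_inv, ihx]; group
      have hβfix : β (w k) = w k := by
        have hfixw : ∀ a ∈ L, α a t (w k) = w k := by
          intro a ha
          obtain ⟨hka, hat⟩ := (hmemL a).mp ha
          have hat' : a < t := by
            rw [Fin.lt_def]
            have h5 := (ne_tIdx_iff hn a).mp hat
            simp only [ht, tIdx]
            omega
          exact FactB a t k hat' (Fin.ne_of_lt hka)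
        have aux : ∀ (L' : List (Fin n)), (∀ a ∈ L', α a t (w k) = w k) →
            ((L'.map (fun i => α i t)).prod) (w k) = w k := by
          intro L'
          induction L' with
          | nil => intro _; simp
          | cons a L' ih =>
            intro hfa
            rw [List.map_cons, List.prod_cons, MulAut.mul_apply,
              ih (fun b hb => hfa b (List.mem_cons_of_mem a hb)),
              hfa a List.mem_cons_self]
        exact aux L hfixw
      have hcomm : w k * N = N * w k := by
        have h5 : N * w k * N⁻¹ = w k := by rw [← hβH, hβfix]
        conv_lhs => rw [← h5]
        group
      exact commute_of_eq_zpow t (w k) hcomm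
  choose mExp hm using FactC
  have FactD : ∀ i j : Fin n, i < j → j ≠ t → mExp i = mExp j := by
    intro i j hij hjt
    have hij' : i ≠ j := Fin.ne_of_lt hij
    have hjlt : (j : ℕ) < n - 1 := (ne_tIdx_iff hn j).mp hjt
    have hit : i ≠ t := by
      rw [ne_tIdx_iff hn]
      have := hij
      rw [Fin.lt_def] at this
      omega
    have hti : t ≠ i := Ne.symm hit
    have htj : t ≠ j := Ne.symm hjt
    set a := mExp i with ha
    set b := mExp j with hb
    set I := FreeGroup.of i with hI
    set J := FreeGroup.of j with hJ
    have h1 := hcm (α i j) (Subgroup.subset_closure ⟨i, j, hij, rfl⟩)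
    have h2 := congrArg (fun (β : MulAut (FreeGroup (Fin n))) => β (FreeGroup.of i)) h1
    simp only [MulAut.mul_apply] at h2
    -- h2 : α i j (z (of i)) = z (α i j (of i))
    have hLHS : α i j (z (FreeGroup.of i)) = N ^ a * (J * I * J⁻¹) * (N ^ a)⁻¹ := by
      rw [hw i, hm i, MulEquiv.map_mul, MulEquiv.map_mul, MulEquiv.map_inv,
        _root_.map_zpow (α i j), hfix i j t hij' hti, hconj i j hij']
    have hRHS : z (α i j (FreeGroup.of i))
        = (N ^ b * J * (N ^ b)⁻¹) * (N ^ a * I * (N ^ a)⁻¹) * (N ^ b * J * (N ^ b)⁻¹)⁻¹ := by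
      rw [hconj i j hij', MulEquiv.map_mul, MulEquiv.map_mul, MulEquiv.map_inv,
        hw i, hw j, hm i, hm j]
    have h2' : N ^ a * (J * I * J⁻¹) * (N ^ a)⁻¹
        = (N ^ b * J * (N ^ b)⁻¹) * (N ^ a * I * (N ^ a)⁻¹) * (N ^ b * J * (N ^ b)⁻¹)⁻¹ := by
      rw [← hLHS, ← hRHS]; exact h2
    have key : (N ^ (a - b) * J) * I * (N ^ (a - b) * J)⁻¹
        = (J * N ^ (a - b)) * I * (J * N ^ (a - b))⁻¹ := by
      calc (N ^ (a - b) * J) * I * (N ^ (a - b) * J)⁻¹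
          = (N ^ b)⁻¹ * (N ^ a * (J * I * J⁻¹) * (N ^ a)⁻¹) * N ^ b := by group
        _ = (N ^ b)⁻¹ * ((N ^ b * J * (N ^ b)⁻¹) * (N ^ a * I * (N ^ a)⁻¹)
              * (N ^ b * J * (N ^ b)⁻¹)⁻¹) * N ^ b := by rw [h2']
        _ = (J * N ^ (a - b)) * I * (J * N ^ (a - b))⁻¹ := by group
    have h4 : ((J * N ^ (a - b))⁻¹ * (N ^ (a - b) * J)) * I
        * ((J * N ^ (a - b))⁻¹ * (N ^ (a - b) * J))⁻¹ = I := by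
      calc ((J * N ^ (a - b))⁻¹ * (N ^ (a - b) * J)) * I
          * ((J * N ^ (a - b))⁻¹ * (N ^ (a - b) * J))⁻¹
          = (J * N ^ (a - b))⁻¹ * ((N ^ (a - b) * J) * I * (N ^ (a - b) * J)⁻¹)
            * (J * N ^ (a - b)) := by group
        _ = (J * N ^ (a - b))⁻¹ * ((J * N ^ (a - b)) * I * (J * N ^ (a - b))⁻¹)
            * (J * N ^ (a - b)) := by rw [key]
        _ = I := by group
    have hcomm4 : ((J * N ^ (a - b))⁻¹ * (N ^ (a - b) * J)) * I
        = I * ((J * N ^ (a - b))⁻¹ * (N ^ (a - b) * J)) := by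
      conv_rhs => rw [← h4]
      group
    have hexp : expSum i ((J * N ^ (a - b))⁻¹ * (N ^ (a - b) * J)) = 1 := by
      rw [_root_.map_mul, _root_.map_inv, _root_.map_mul, _root_.map_mul, expSum_zpow_ne i t hti,
        expSum_of_ne i j (Ne.symm hij')]
      simp
    have h5 := eq_one_of_commute_of_expSum i _ hcomm4 hexp
    have h6 : N ^ (a - b) * J = J * N ^ (a - b) := (inv_mul_eq_one.mp h5).symm
    have h7 : a - b = 0 := by
      apply zpow_commute_ne j t htj
      exact h6
    omega
  -- conclusion
  have h0lt : (0 : ℕ) < n := by omega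
  set k0 : Fin n := ⟨0, h0lt⟩ with hk0
  have hk0t : k0 ≠ t := by
    rw [ne_tIdx_iff hn]
    simp [hk0]
    omega
  refine ⟨mExp k0, ?_⟩
  rw [cAut_eq_conj hn α hconj hfix, ← ht, ← hN, ← _root_.map_zpow (MulAut.conj : FreeGroup (Fin n) →* MulAut (FreeGroup (Fin n))) N (mExp k0)]
  apply mulAut_ext
  intro x
  rw [MulAut.conj_apply]
  by_cases hx : x = t
  · subst hx
    rw [fixes_top_of_mem α hz hfix hn, ← ht, ← hN]
    group
  · have hmx : mExp x = mExp k0 := by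
      by_cases hxk0 : x = k0
      · rw [hxk0]
      · have h0x : k0 < x := by
          rw [Fin.lt_def]
          simp only [hk0]
          have : (x : ℕ) ≠ 0 := fun hc => hxk0 (Fin.ext (by simpa using hc))
          omega
        exact (FactD k0 x h0x hx).symm
    rw [hw x, hm x, hmx]

omit hconj in
lemma conj_top_central {β : MulAut F} (hβ : β ∈ McCoolPlus n α) :
    β * MulAut.conj (FreeGroup.of (tIdx n hn))
      = MulAut.conj (FreeGroup.of (tIdx n hn)) * β := by
  apply mulAut_ext
  intro x
  rw [MulAut.mul_apply, MulAut.mul_apply, MulAut.conj_apply, MulAut.conj_apply,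
    MulEquiv.map_mul, MulEquiv.map_mul, MulEquiv.map_inv, fixes_top_of_mem α hβ hfix hn]

lemma cAut_zpow_injective (M : ℤ) (hM : cAut n hn α ^ M = 1) : M = 0 := by
  have h0lt : (0 : ℕ) < n := by omega
  set k0 : Fin n := ⟨0, h0lt⟩ with hk0
  have htk0 : tIdx n hn ≠ k0 := by
    intro hc
    have := congrArg Fin.val hc
    simp [tIdx, hk0] at this
    omega
  rw [cAut_eq_conj hn α hconj hfix,
    ← _root_.map_zpow (MulAut.conj : FreeGroup (Fin n) →* MulAut (FreeGroup (Fin n)))] at hM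
  have h2 := congrArg
    (fun (β : MulAut (FreeGroup (Fin n))) => β (FreeGroup.of k0)) hM
  simp only [MulAut.one_apply, MulAut.conj_apply] at h2
  have hcc : (FreeGroup.of (tIdx n hn)) ^ M * FreeGroup.of k0
      = FreeGroup.of k0 * (FreeGroup.of (tIdx n hn)) ^ M := by
    conv_rhs => rw [← h2]
    group
  exact zpow_commute_ne k0 (tIdx n hn) htk0 M hcc

end McCool

/-- The center of the upper triangular McCool group `PΣ_n⁺` is the infinite
cyclic subgroup generated by `c = α_{1,n} α_{2,n} ⋯ α_{n-1,n}`: one has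
`Z(PΣ_n⁺) = ⟨c⟩` and `⟨c⟩ ≅ ℤ`. -/
theorem center_eq_zpowers_c (n : ℕ) (hn : 2 ≤ n)
    (α : Fin n → Fin n → MulAut (FreeGroup (Fin n)))
    (hconj : ∀ i j : Fin n, i ≠ j →
      α i j (FreeGroup.of i) = FreeGroup.of j * FreeGroup.of i * (FreeGroup.of j)⁻¹)
    (hfix : ∀ i j k : Fin n, i ≠ j → k ≠ i → α i j (FreeGroup.of k) = FreeGroup.of k) :
    ∃ hc : cAut n hn α ∈ McCoolPlus n α,
      Subgroup.center (McCoolPlus n α)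
        = Subgroup.zpowers (⟨cAut n hn α, hc⟩ : McCoolPlus n α) ∧
      Nonempty ((Subgroup.zpowers (⟨cAut n hn α, hc⟩ : McCoolPlus n α)) ≃* Multiplicative ℤ) := by
  refine ⟨cAut_mem hn α hconj hfix, ?_, ?_⟩
  · apply le_antisymm
    · rintro ⟨z, hz⟩ hzc
      rw [Subgroup.mem_center_iff] at hzc
      have hcm : ∀ β, β ∈ McCoolPlus n α → β * z = z * β := by
        intro β hβ
        exact congrArg Subtype.val (hzc ⟨β, hβ⟩)
      obtain ⟨M, hM⟩ := central_mem_zpowers hn α hconj hfix z hz hcm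
      rw [Subgroup.mem_zpowers_iff]
      refine ⟨M, Subtype.ext ?_⟩
      rw [SubgroupClass.coe_zpow]
      exact hM.symm
    · rw [Subgroup.zpowers_le, Subgroup.mem_center_iff]
      intro g
      apply Subtype.ext
      show (g : MulAut (FreeGroup (Fin n))) * cAut n hn α = cAut n hn α * (g : MulAut (FreeGroup (Fin n)))
      rw [cAut_eq_conj hn α hconj hfix]
      exact conj_top_central hn α hfix g.2
  · set c' : McCoolPlus n α := (⟨cAut n hn α, cAut_mem hn α hconj hfix⟩ : McCoolPlus n α) with hc'
    let f : Multiplicative ℤ →* (Subgroup.zpowers c') :=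
      { toFun := fun M => ⟨c' ^ (Multiplicative.toAdd M),
          Subgroup.mem_zpowers_iff.mpr ⟨Multiplicative.toAdd M, rfl⟩⟩
        map_one' := Subtype.ext (by simp)
        map_mul' := fun x y => Subtype.ext (by simp [zpow_add]) }
    have hfb : Function.Bijective f := by
      constructor
      · intro x y hxy
        have h1 : c' ^ (Multiplicative.toAdd x) = c' ^ (Multiplicative.toAdd y) :=
          congrArg Subtype.val hxy
        have h2 : cAut n hn α ^ (Multiplicative.toAdd x) = cAut n hn α ^ (Multiplicative.toAdd y) := by
          have := congrArg Subtype.val h1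
          rwa [SubgroupClass.coe_zpow, SubgroupClass.coe_zpow] at this
        have h3 : cAut n hn α ^ (Multiplicative.toAdd x - Multiplicative.toAdd y) = 1 := by
          rw [zpow_sub, h2, mul_inv_cancel]
        have h4 := cAut_zpow_injective hn α hconj hfix _ h3
        have h5 : Multiplicative.toAdd x = Multiplicative.toAdd y := by omega
        exact Multiplicative.toAdd.injective h5
      · rintro ⟨x, hx⟩
        obtain ⟨k, hk⟩ := Subgroup.mem_zpowers_iff.mp hx
        exact ⟨Multiplicative.ofAdd k, Subtype.ext (by simpa [f] using hk)⟩
    exact ⟨(MulEquiv.ofBijective f hfb).symm⟩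
end

section
/- The upper triangular McCool group decomposes as a direct product with its center: there is a group isomorphism PΣ_n^+ ≅ (PΣ_n^+ / Z(PΣ_n^+)) × ℤ, where Z(PΣ_n^+) denotes the center of PΣ_n^+. -/
set_option linter.unusedSectionVars false

namespace FGAux

open FreeGroup List

variable {γ : Type*} [DecidableEq γ]

/-- A word is reduced: no adjacent cancelling pair. -/
def IsRed (L : List (γ × Bool)) : Prop :=
  List.Chain' (fun a b => ¬(b.1 = a.1 ∧ b.2 = !a.2)) L

theorem isRed_no_step {L M : List (γ × Bool)} (h : IsRed L) : ¬ FreeGroup.Red.Step L M := by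
  intro hs
  cases hs with
  | @not L₁ L₂ x b =>
    have := List.isChain_append.mp h
    have h2 := this.2.1
    rw [List.isChain_cons_cons] at h2
    exact h2.1 ⟨rfl, rfl⟩

theorem isRed_red_eq {L M : List (γ × Bool)} (h : IsRed L) (hr : FreeGroup.Red L M) : M = L := by
  induction hr using Relation.ReflTransGen.head_induction_on with
  | refl => rfl
  | head s _ _ => exact absurd s (isRed_no_step h)

theorem reduce_eq_self {L : List (γ × Bool)} (h : IsRed L) : FreeGroup.reduce L = L :=
  isRed_red_eq h FreeGroup.reduce.red

theorem toWord_mk_eq {L : List (γ × Bool)} (h : IsRed L) : (FreeGroup.mk L).toWord = L := by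
  rw [FreeGroup.toWord_mk, reduce_eq_self h]

theorem isRed_of_no_split {L : List (γ × Bool)}
    (h : ∀ (L₂ L₃ : List (γ × Bool)) (x : γ) (b : Bool), L ≠ L₂ ++ (x, b) :: (x, !b) :: L₃) :
    IsRed L := by
  induction L with
  | nil => exact List.isChain_nil
  | cons a rest ih =>
    cases rest with
    | nil => exact List.isChain_singleton a
    | cons c t =>
      rw [IsRed, List.Chain', List.isChain_cons_cons]
      constructor
      · rintro ⟨h1, h2⟩
        obtain ⟨a1, a2⟩ := a
        obtain ⟨c1, c2⟩ := c
        simp only at h1 h2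
        exact h [] t a1 a2 (by rw [h1, h2]; rfl)
      · exact ih (fun L₂ L₃ x b hL => h (a :: L₂) L₃ x b (by rw [hL, List.cons_append]))

theorem isRed_reduce (L : List (γ × Bool)) : IsRed (FreeGroup.reduce L) :=
  isRed_of_no_split (fun L₂ L₃ x b hL => FreeGroup.reduce.not hL)

theorem isRed_toWord (g : FreeGroup γ) : IsRed g.toWord := by
  have : FreeGroup.reduce g.toWord = g.toWord := FreeGroup.reduce_toWord g
  rw [← this]; exact isRed_reduce _

theorem isRed_invRev {L : List (γ × Bool)} (h : IsRed L) : IsRed (FreeGroup.invRev L) := by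
  rw [FreeGroup.invRev, IsRed, List.Chain', List.isChain_reverse, List.isChain_map]
  refine h.imp ?_
  rintro ⟨x, b⟩ ⟨y, c⟩ hb ⟨h1, h2⟩
  simp only at h1 h2
  refine hb ⟨h1.symm, ?_⟩
  simp only []
  cases b <;> cases c <;> first | rfl | (exact absurd h2 (by decide))

theorem toWord_inv' (g : FreeGroup γ) : g⁻¹.toWord = FreeGroup.invRev g.toWord := by
  have : g⁻¹ = FreeGroup.mk (FreeGroup.invRev g.toWord) := by
    rw [← FreeGroup.inv_mk, FreeGroup.mk_toWord]
  rw [this, toWord_mk_eq (isRed_invRev (isRed_toWord g))]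

/-- letters of a product are among letters of the factors -/
theorem toWord_mul_sublist (g h : FreeGroup γ) : (g * h).toWord <+ g.toWord ++ h.toWord := by
  have : g * h = FreeGroup.mk (g.toWord ++ h.toWord) := by
    rw [← FreeGroup.mul_mk, FreeGroup.mk_toWord, FreeGroup.mk_toWord]
  rw [this, FreeGroup.toWord_mk]
  exact FreeGroup.Red.sublist FreeGroup.reduce.red

/-- W1: members of the closure of a set of generators only use those letters. -/
theorem letters_mem_of_mem_closure {S : Set γ} {g : FreeGroup γ}
    (hg : g ∈ Subgroup.closure (FreeGroup.of '' S)) :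
    ∀ l ∈ g.toWord, l.1 ∈ S := by
  induction hg using Subgroup.closure_induction with
  | mem x hx =>
    obtain ⟨s, hs, rfl⟩ := hx
    intro l hl
    rw [show (FreeGroup.of s : FreeGroup γ) = FreeGroup.mk [(s, true)] from rfl,
      toWord_mk_eq (List.isChain_singleton _)] at hl
    simp at hl; rw [hl]; exact hs
  | one => intro l hl; simp [FreeGroup.toWord_one] at hl
  | mul x y hx hy ihx ihy =>
    intro l hl
    have := (toWord_mul_sublist x y).mem hl
    rw [List.mem_append] at this
    rcases this with h | h
    · exact ihx l h
    · exact ihy l h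
  | inv x hx ihx =>
    intro l hl
    rw [toWord_inv', FreeGroup.invRev] at hl
    simp only [List.mem_reverse, List.mem_map] at hl
    obtain ⟨a, ha, rfl⟩ := hl
    exact ihx a ha

end FGAux

namespace FGAux2
open FreeGroup
variable {γ : Type*} [DecidableEq γ]

theorem mk_singleton_eq_zpow (s : γ) (b : Bool) :
    FreeGroup.mk [(s, b)] = FreeGroup.of s ^ (cond b 1 (-1) : ℤ) := by
  cases b
  · show FreeGroup.mk [(s, false)] = FreeGroup.of s ^ (-1 : ℤ)
    rw [zpow_neg, zpow_one]
    show FreeGroup.mk [(s, false)] = (FreeGroup.mk [(s, true)])⁻¹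
    rw [FreeGroup.inv_mk]
    rfl
  · rw [cond, zpow_one]; rfl

theorem conj_ne (s : γ) (g : FreeGroup γ) (hne : g.toWord ≠ [])
    (hhead : (g.toWord.head hne).1 ≠ s) (hlast : (g.toWord.getLast hne).1 ≠ s) :
    g * FreeGroup.of s * g⁻¹ ≠ FreeGroup.of s := by
  intro hEq
  set L := g.toWord with hL
  have hmk : g * FreeGroup.of s * g⁻¹ =
      FreeGroup.mk (L ++ (s, true) :: FreeGroup.invRev L) := by
    conv_lhs => rw [← FreeGroup.mk_toWord (x := g)]
    rw [show (FreeGroup.of s : FreeGroup γ) = FreeGroup.mk [(s, true)] from rfl,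
      FreeGroup.inv_mk, FreeGroup.mul_mk, FreeGroup.mul_mk]
    simp
    rfl
  have hredL : FGAux.IsRed L := FGAux.isRed_toWord g
  have hred : FGAux.IsRed (L ++ (s, true) :: FreeGroup.invRev L) := by
    rw [FGAux.IsRed, List.Chain', List.isChain_append]
    refine ⟨hredL, ?_, ?_⟩
    · rw [List.isChain_cons]
      constructor
      · intro y hy
        rw [FreeGroup.invRev] at hy
        rw [List.head?_reverse] at hy
        rw [List.getLast?_map] at hy
        rw [List.getLast?_eq_getLast hne] at hy
        simp only [Option.map_some, Option.mem_def, Option.some.injEq] at hy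
        subst hy
        rintro ⟨h1, -⟩
        exact hlast h1
      · exact FGAux.isRed_invRev hredL
    · intro x hx y hy
      rw [List.getLast?_eq_getLast hne, Option.mem_def, Option.some.injEq] at hx
      subst hx
      simp only [List.head?_cons, Option.mem_def, Option.some.injEq] at hy
      subst hy
      rintro ⟨h1, -⟩
      exact hlast h1.symm
  have h1 := congrArg FreeGroup.toWord (hmk.symm.trans hEq)
  rw [FGAux.toWord_mk_eq hred] at h1
  have h2 : (FreeGroup.of s : FreeGroup γ).toWord = [(s, true)] :=
    FGAux.toWord_mk_eq (List.isChain_singleton _)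
  rw [h2] at h1
  have h3 := congrArg List.length h1
  have hLpos : 0 < L.length := List.length_pos_iff.mpr hne
  simp [FreeGroup.invRev_length] at h3
  omega

/-- The centralizer of a generator of a free group consists of its powers. -/
theorem eq_zpow_of_commute_aux (s : γ) :
    ∀ (N : ℕ) (g : FreeGroup γ), g.toWord.length ≤ N →
      Commute (FreeGroup.of s) g → ∃ m : ℤ, g = FreeGroup.of s ^ m := by
  intro N
  induction N with
  | zero =>
    intro g hlen _
    exact ⟨0, by rw [zpow_zero, ← FreeGroup.toWord_eq_nil_iff,
      List.length_eq_zero_iff.mp (Nat.le_zero.mp hlen)]⟩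
  | succ N ih =>
    intro g hlen hcomm
    by_cases hne : g.toWord = []
    · exact ⟨0, by rw [zpow_zero, ← FreeGroup.toWord_eq_nil_iff, hne]⟩
    by_cases ha : (g.toWord.head hne).1 = s
    · -- peel from the front
      set a := g.toWord.head hne with haa
      have hLdec : g.toWord = a :: g.toWord.tail := (List.cons_head_tail hne).symm
      have hg : g = FreeGroup.mk [a] * FreeGroup.mk g.toWord.tail := by
        conv_lhs => rw [← FreeGroup.mk_toWord (x := g), hLdec]
        rw [FreeGroup.mul_mk]
        rfl
      have hred : FGAux.IsRed g.toWord.tail := (FGAux.isRed_toWord g).tail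
      have hσ : FreeGroup.mk [a] = FreeGroup.of s ^ (cond a.2 1 (-1) : ℤ) := by
        rw [← ha]
        exact mk_singleton_eq_zpow a.1 a.2
      set h := FreeGroup.mk g.toWord.tail with hh
      have hcomm' : Commute (FreeGroup.of s) h := by
        have : h = (FreeGroup.of s ^ (cond a.2 1 (-1) : ℤ))⁻¹ * g := by
          rw [← hσ, hg, ← mul_assoc, inv_mul_cancel, one_mul]
        rw [this]
        exact ((Commute.refl (FreeGroup.of s)).zpow_right _).inv_right.mul_right hcomm
      have hwd : h.toWord = g.toWord.tail := FGAux.toWord_mk_eq hred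
      have hlen' : h.toWord.length ≤ N := by
        rw [hwd]
        have := congrArg List.length hLdec
        simp only [List.length_cons] at this
        omega
      obtain ⟨m, hm⟩ := ih h hlen' hcomm'
      exact ⟨(cond a.2 1 (-1) : ℤ) + m, by rw [hg, hσ, hm, ← zpow_add]⟩
    · by_cases hb : (g.toWord.getLast hne).1 = s
      · -- peel from the back
        set x := g.toWord.getLast hne with hxx
        have hLdec : g.toWord = g.toWord.dropLast ++ [x] :=
          (List.dropLast_append_getLast hne).symm
        have hg : g = FreeGroup.mk g.toWord.dropLast * FreeGroup.mk [x] := by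
          conv_lhs => rw [← FreeGroup.mk_toWord (x := g), hLdec]
          rw [FreeGroup.mul_mk]
        have hred : FGAux.IsRed g.toWord.dropLast := (FGAux.isRed_toWord g).dropLast
        have hσ : FreeGroup.mk [x] = FreeGroup.of s ^ (cond x.2 1 (-1) : ℤ) := by
          rw [← hb]
          exact mk_singleton_eq_zpow x.1 x.2
        set h := FreeGroup.mk g.toWord.dropLast with hh
        have hcomm' : Commute (FreeGroup.of s) h := by
          have : h = g * (FreeGroup.of s ^ (cond x.2 1 (-1) : ℤ))⁻¹ := by
            rw [← hσ, hg, mul_assoc, mul_inv_cancel, mul_one]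
          rw [this]
          exact hcomm.mul_right ((Commute.refl (FreeGroup.of s)).zpow_right _).inv_right
        have hwd : h.toWord = g.toWord.dropLast := FGAux.toWord_mk_eq hred
        have hlen' : h.toWord.length ≤ N := by
          rw [hwd, List.length_dropLast]
          have : 0 < g.toWord.length := List.length_pos_iff.mpr hne
          omega
        obtain ⟨m, hm⟩ := ih h hlen' hcomm'
        exact ⟨m + (cond x.2 1 (-1) : ℤ), by rw [hg, hσ, hm, ← zpow_add]⟩
      · exfalso
        refine conj_ne s g hne ha hb ?_
        rw [← hcomm.eq, mul_assoc, mul_inv_cancel, mul_one]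

theorem eq_zpow_of_commute {s : γ} {g : FreeGroup γ}
    (hcomm : Commute (FreeGroup.of s) g) : ∃ m : ℤ, g = FreeGroup.of s ^ m :=
  eq_zpow_of_commute_aux s g.toWord.length g le_rfl hcomm

/-- counting occurrences of a letter, as a homomorphism to ℤ. -/
noncomputable def cnt (s : γ) : FreeGroup γ →* Multiplicative ℤ :=
  FreeGroup.lift (fun t => if t = s then (Multiplicative.ofAdd (1 : ℤ)) else 1)

theorem cnt_of_zpow (s : γ) (m : ℤ) : cnt s (FreeGroup.of s ^ m) = Multiplicative.ofAdd m := by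
  rw [map_zpow, cnt, FreeGroup.lift_apply_of, if_pos rfl, ← ofAdd_zsmul, smul_eq_mul, mul_one]

theorem cnt_eq_one (s : γ) (g : FreeGroup γ) (h : ∀ l ∈ g.toWord, l.1 ≠ s) :
    cnt s g = 1 := by
  conv_lhs => rw [← FreeGroup.mk_toWord (x := g)]
  rw [cnt, FreeGroup.lift_mk]
  apply List.prod_eq_one
  intro x hx
  simp only [List.mem_map] at hx
  obtain ⟨l, hl, rfl⟩ := hx
  have := h l hl
  cases l.2 <;> simp [this]

/-- W2: an element avoiding letter `s` that commutes with `of s` is trivial. -/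
theorem eq_one_of_commute_of_avoid {s : γ} {g : FreeGroup γ}
    (hcomm : Commute (FreeGroup.of s) g) (h : ∀ l ∈ g.toWord, l.1 ≠ s) : g = 1 := by
  obtain ⟨m, rfl⟩ := eq_zpow_of_commute hcomm
  have h1 := cnt_eq_one s _ h
  rw [cnt_of_zpow] at h1
  have : m = 0 := by
    have := congrArg Multiplicative.toAdd h1
    simpa using this
  rw [this, zpow_zero]

end FGAux2


namespace MCAux

def tr (a : ℤ) : Equiv.Perm ℤ := Equiv.addRight a

theorem tr_apply (a x : ℤ) : tr a x = x + a := rfl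

theorem tr_mul (a b : ℤ) : tr a * tr b = tr (a + b) := by
  ext x
  simp only [tr, Equiv.Perm.mul_apply, Equiv.coe_addRight]
  ring

theorem tr_zero : tr 0 = 1 := by
  ext x; simp [tr]

theorem tr_inv (a : ℤ) : (tr a)⁻¹ = tr (-a) := by
  rw [eq_comm, eq_inv_iff_mul_eq_one, tr_mul, neg_add_cancel, tr_zero]

theorem conj_tr_apply (a : ℤ) (p : Equiv.Perm ℤ) (x : ℤ) :
    (tr a * p * (tr a)⁻¹) x = p (x - a) + a := by
  rw [tr_inv]
  simp only [Equiv.Perm.mul_apply, tr_apply]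
  rw [sub_eq_add_neg]

variable {n : ℕ}

def i0 (hn : 2 ≤ n) : Fin n := ⟨0, by omega⟩
def iL (hn : 2 ≤ n) : Fin n := ⟨n - 1, by omega⟩

theorem i0_ne_iL (hn : 2 ≤ n) : i0 hn ≠ iL hn := by
  simp only [i0, iL, Ne, Fin.mk.injEq]
  omega

theorem lt_iL_of_ne (hn : 2 ≤ n) {k : Fin n} (h : k ≠ iL hn) : k < iL hn := by
  have : k.val < n := k.isLt
  have : k.val ≠ n - 1 := fun hh => h (Fin.ext hh)
  simp only [Fin.lt_def, iL]
  omega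

theorem ne_iL_of_lt (hn : 2 ≤ n) {i j : Fin n} (h : i < j) : i ≠ iL hn := by
  intro he
  have h1 := j.isLt
  rw [Fin.lt_def, he] at h
  simp only [iL] at h
  omega

def fgen (hn : 2 ≤ n) : Fin n → Equiv.Perm ℤ := fun k =>
  if k = iL hn then Equiv.addRight 1 else if k = i0 hn then Equiv.neg ℤ else 1

def fhom (hn : 2 ≤ n) : FreeGroup (Fin n) →* Equiv.Perm ℤ := FreeGroup.lift (fgen hn)

theorem fhom_of (hn : 2 ≤ n) (k : Fin n) : fhom hn (FreeGroup.of k) = fgen hn k :=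
  FreeGroup.lift_apply_of

theorem fgen_i0 (hn : 2 ≤ n) : fgen hn (i0 hn) = Equiv.neg ℤ := by
  rw [fgen, if_neg (i0_ne_iL hn), if_pos rfl]

theorem fgen_iL (hn : 2 ≤ n) : fgen hn (iL hn) = Equiv.addRight 1 := by
  rw [fgen, if_pos rfl]

theorem tr_one_eq : tr 1 = Equiv.addRight 1 := rfl

theorem fgen_comm_tr (hn : 2 ≤ n) {k : Fin n} (hk : k ≠ i0 hn) (a : ℤ) :
    tr a * fgen hn k * (tr a)⁻¹ = fgen hn k := by
  by_cases h : k = iL hn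
  · subst h
    rw [fgen_iL, ← tr_one_eq, tr_mul, tr_inv, tr_mul]
    congr 1
    ring
  · rw [fgen, if_neg h, if_neg hk, mul_one, mul_inv_cancel]

theorem ne_i0_of_lt (hn : 2 ≤ n) {i j : Fin n} (h : i < j) : j ≠ i0 hn := by
  intro he
  rw [Fin.lt_def, he] at h
  simp only [i0] at h
  omega

variable {α : Fin n → Fin n → MulAut (FreeGroup (Fin n))}

theorem exists_tr (hn : 2 ≤ n)
    (hconj : ∀ i j : Fin n, i ≠ j →
      α i j (FreeGroup.of i) = FreeGroup.of j * FreeGroup.of i * (FreeGroup.of j)⁻¹)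
    (hfix : ∀ i j k : Fin n, i ≠ j → k ≠ i → α i j (FreeGroup.of k) = FreeGroup.of k)
    {β : MulAut (FreeGroup (Fin n))} (hβ : β ∈ McCoolPlus n α) :
    ∃ a : ℤ, ∀ w, fhom hn (β w) = tr a * fhom hn w * (tr a)⁻¹ := by
  induction hβ using Subgroup.closure_induction with
  | mem x hx =>
    obtain ⟨i, j, hij, rfl⟩ := hx
    have hne : i ≠ j := ne_of_lt hij
    have hiL : i ≠ iL hn := ne_iL_of_lt hn hij
    have hji0 : j ≠ i0 hn := ne_i0_of_lt hn hij
    set a : ℤ := if i = i0 hn ∧ j = iL hn then 1 else 0 with ha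
    refine ⟨a, ?_⟩
    have key : ∀ k : Fin n, fhom hn (α i j (FreeGroup.of k)) =
        (MulAut.conj (tr a)) (fhom hn (FreeGroup.of k)) := by
      intro k
      rw [MulAut.conj_apply]
      by_cases hk : k = i
      · subst hk
        rw [hconj k j hne, map_mul, map_mul, map_inv, fhom_of, fhom_of]
        by_cases hki : k = i0 hn
        · by_cases hj : j = iL hn
          · rw [ha, if_pos ⟨hki, hj⟩, hki, hj, fgen_iL, fgen_i0, tr_one_eq]
          · have : fgen hn j = 1 := by rw [fgen, if_neg hj, if_neg hji0]
            rw [ha, if_neg (fun hh => hj hh.2), tr_zero, this]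
            try simp
        · have : fgen hn k = 1 := by rw [fgen, if_neg hiL, if_neg hki]
          rw [ha, if_neg (fun hh => hki hh.1), tr_zero, this]
          try simp
      · rw [hfix i j k hne hk, fhom_of]
        by_cases hcond : i = i0 hn ∧ j = iL hn
        · rw [ha, if_pos hcond]
          exact (fgen_comm_tr hn (fun hh => hk (hh.trans hcond.1.symm)) 1).symm
        · rw [ha, if_neg hcond, tr_zero]
          simp
    have hhom : (fhom hn).comp (α i j).toMonoidHom =
        ((MulAut.conj (tr a)).toMonoidHom.comp (fhom hn)) :=
      FreeGroup.ext_hom _ _ (fun k => key k)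
    intro w
    have := DFunLike.congr_fun hhom w
    simpa [MulAut.conj_apply] using this
  | one =>
    refine ⟨0, fun w => ?_⟩
    rw [tr_zero]
    simp
  | mul x y hx hy ihx ihy =>
    obtain ⟨a, hx'⟩ := ihx
    obtain ⟨b, hy'⟩ := ihy
    refine ⟨a + b, fun w => ?_⟩
    have h1 : (x * y) w = x (y w) := rfl
    rw [h1, hx', hy']
    have h2 : tr a * tr b = tr (a + b) := tr_mul a b
    have h3 : (tr b)⁻¹ * (tr a)⁻¹ = (tr (a + b))⁻¹ := by
      rw [tr_inv, tr_inv, tr_mul, tr_inv]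
      congr 1
      ring
    rw [show tr a * (tr b * fhom hn w * (tr b)⁻¹) * (tr a)⁻¹ =
        (tr a * tr b) * fhom hn w * ((tr b)⁻¹ * (tr a)⁻¹) by group, h2, h3]
  | inv x hx ihx =>
    obtain ⟨a, hx'⟩ := ihx
    refine ⟨-a, fun w => ?_⟩
    have h1 : x (x⁻¹ w) = w := by
      rw [show (x⁻¹ : MulAut (FreeGroup (Fin n))) w = x.symm w from rfl]
      exact x.apply_symm_apply w
    have h2 := hx' (x⁻¹ w)
    rw [h1] at h2
    rw [← tr_inv, h2]
    group

section Chi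

variable (hn : 2 ≤ n)
  (hconj : ∀ i j : Fin n, i ≠ j →
      α i j (FreeGroup.of i) = FreeGroup.of j * FreeGroup.of i * (FreeGroup.of j)⁻¹)
  (hfix : ∀ i j k : Fin n, i ≠ j → k ≠ i → α i j (FreeGroup.of k) = FreeGroup.of k)

/-- value used to define the character -/
def chiv (hn : 2 ≤ n) (β : MulAut (FreeGroup (Fin n))) : ℤ :=
  fhom hn (β (FreeGroup.of (i0 hn))) 0

theorem fhom_apply_of_i0 {β : MulAut (FreeGroup (Fin n))} {a : ℤ}
    (hA : ∀ w, fhom hn (β w) = tr a * fhom hn w * (tr a)⁻¹) (x : ℤ) :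
    fhom hn (β (FreeGroup.of (i0 hn))) x = 2 * a - x := by
  rw [hA, conj_tr_apply, fhom_of, fgen_i0]
  simp only [Equiv.neg_apply]
  ring

theorem chiv_eq {β : MulAut (FreeGroup (Fin n))} {a : ℤ}
    (hA : ∀ w, fhom hn (β w) = tr a * fhom hn w * (tr a)⁻¹) :
    chiv hn β = 2 * a := by
  rw [chiv, fhom_apply_of_i0 hn hA 0, sub_zero]

theorem chiv_mul {β γ : MulAut (FreeGroup (Fin n))}
    {a b : ℤ} (hA : ∀ w, fhom hn (β w) = tr a * fhom hn w * (tr a)⁻¹)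
    (hB : ∀ w, fhom hn (γ w) = tr b * fhom hn w * (tr b)⁻¹) :
    chiv hn (β * γ) = chiv hn β + chiv hn γ := by
  have h1 : chiv hn (β * γ) = fhom hn (β (γ (FreeGroup.of (i0 hn)))) 0 := rfl
  rw [h1, hA, conj_tr_apply, fhom_apply_of_i0 hn hB, chiv_eq hn hA, chiv_eq hn hB]
  ring

/-- The character `PΣ_n⁺ → ℤ`. -/
noncomputable def Chi : ↥(McCoolPlus n α) →* Multiplicative ℤ :=
  MonoidHom.mk' (fun β => Multiplicative.ofAdd (chiv hn β.1 / 2))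
    (by
      rintro ⟨β, hβ⟩ ⟨γ, hγ⟩
      obtain ⟨a, hA⟩ := exists_tr hn hconj hfix hβ
      obtain ⟨b, hB⟩ := exists_tr hn hconj hfix hγ
      have h1 : chiv hn (β * γ) = chiv hn β + chiv hn γ := chiv_mul hn hA hB
      simp only [Submonoid.mk_mul_mk, ← ofAdd_add]
      congr 1
      show chiv hn (β * γ) / 2 = chiv hn β / 2 + chiv hn γ / 2
      rw [h1, chiv_eq hn hA, chiv_eq hn hB,
        Int.mul_ediv_cancel_left a (by norm_num), Int.mul_ediv_cancel_left b (by norm_num),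
        show 2 * a + 2 * b = 2 * (a + b) by ring,
        Int.mul_ediv_cancel_left _ (by norm_num : (2:ℤ) ≠ 0)])

end Chi

section Zeta

variable (hn : 2 ≤ n)
  (hconj : ∀ i j : Fin n, i ≠ j →
      α i j (FreeGroup.of i) = FreeGroup.of j * FreeGroup.of i * (FreeGroup.of j)⁻¹)
  (hfix : ∀ i j k : Fin n, i ≠ j → k ≠ i → α i j (FreeGroup.of k) = FreeGroup.of k)

include hconj hfix

/-- every element of the McCool group fixes the last generator -/
theorem fix_last {β : MulAut (FreeGroup (Fin n))} (hβ : β ∈ McCoolPlus n α) :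
    β (FreeGroup.of (iL hn)) = FreeGroup.of (iL hn) := by
  induction hβ using Subgroup.closure_induction with
  | mem x hx =>
    obtain ⟨i, j, hij, rfl⟩ := hx
    exact hfix i j (iL hn) (ne_of_lt hij) (Ne.symm (ne_iL_of_lt hn hij))
  | one => rfl
  | mul x y hx hy ihx ihy =>
    show x (y (FreeGroup.of (iL hn))) = _
    rw [ihy, ihx]
  | inv x hx ihx =>
    have h2 : (x⁻¹ : MulAut (FreeGroup (Fin n))) (x (FreeGroup.of (iL hn))) =
        FreeGroup.of (iL hn) := x.symm_apply_apply _
    rw [ihx] at h2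
    exact h2

/-- conjugation by the last generator, as an automorphism -/
def zeta (hn : 2 ≤ n) : MulAut (FreeGroup (Fin n)) := MulAut.conj (FreeGroup.of (iL hn))

omit hconj hfix in
theorem zeta_apply (w : FreeGroup (Fin n)) :
    zeta hn w = FreeGroup.of (iL hn) * w * (FreeGroup.of (iL hn))⁻¹ := rfl

theorem zeta_mem : zeta hn ∈ McCoolPlus n α := by
  have key : ∀ m : ℕ, m ≤ n - 1 → ∃ β : MulAut (FreeGroup (Fin n)), β ∈ McCoolPlus n α ∧
      ∀ k : Fin n, (k.val < m → β (FreeGroup.of k) =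
          FreeGroup.of (iL hn) * FreeGroup.of k * (FreeGroup.of (iL hn))⁻¹) ∧
        (¬(k.val < m) → β (FreeGroup.of k) = FreeGroup.of k) := by
    intro m
    induction m with
    | zero =>
      intro _
      exact ⟨1, one_mem _, fun k => ⟨fun h => absurd h (Nat.not_lt_zero _), fun _ => rfl⟩⟩
    | succ m ih =>
      intro hm
      obtain ⟨β, hβ, hprop⟩ := ih (by omega)
      set i : Fin n := ⟨m, by omega⟩ with hi
      have hiiL : i ≠ iL hn := by
        simp only [hi, iL, Ne, Fin.mk.injEq]
        omega
      have hilt : i < iL hn := lt_iL_of_ne hn hiiL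
      refine ⟨α i (iL hn) * β, mul_mem (Subgroup.subset_closure ⟨i, iL hn, hilt, rfl⟩) hβ,
        fun k => ⟨fun hk => ?_, fun hk => ?_⟩⟩
      · show α i (iL hn) (β (FreeGroup.of k)) = _
        by_cases hki : k = i
        · have hkv : (k : ℕ) = m := by rw [hki]
          rw [(hprop k).2 (by omega), hki]
          exact hconj i (iL hn) hiiL
        · have hklt : k.val < m := by
            have : k.val ≠ m := fun hh => hki (Fin.ext (by simp [hi, hh]))
            omega
          rw [(hprop k).1 hklt, map_mul, map_mul, map_inv,
            hfix i (iL hn) (iL hn) hiiL (Ne.symm hiiL),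
            hfix i (iL hn) k hiiL hki]
      · show α i (iL hn) (β (FreeGroup.of k)) = _
        have hki : k ≠ i := by
          rintro rfl
          exact hk (by rw [hi]; exact Nat.lt_succ_self m)
        rw [(hprop k).2 (by omega), hfix i (iL hn) k hiiL hki]
  obtain ⟨β, hβ, hprop⟩ := key (n - 1) le_rfl
  have : β = zeta hn := by
    apply MulEquiv.toMonoidHom_injective
    apply FreeGroup.ext_hom
    intro k
    show β (FreeGroup.of k) = zeta hn (FreeGroup.of k)
    rw [zeta_apply]
    by_cases hk : k.val < n - 1
    · exact (hprop k).1 hk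
    · have hkiL : k = iL hn := by
        have := k.isLt
        apply Fin.ext
        simp only [iL]
        omega
      rw [(hprop k).2 hk, hkiL]
      group
  rw [← this]
  exact hβ

omit hconj hfix in
theorem conj_mulaut {H : Type*} [Group H] (β : MulAut H) (h : H) :
    β * MulAut.conj h * β⁻¹ = MulAut.conj (β h) := by
  apply MulEquiv.toMonoidHom_injective
  ext w
  show β ((MulAut.conj h) (β⁻¹ w)) = (MulAut.conj (β h)) w
  rw [MulAut.conj_apply, MulAut.conj_apply, map_mul, map_mul, map_inv]
  have : β ((β⁻¹ : MulAut H) w) = w := β.apply_symm_apply w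
  rw [this]

theorem zeta_comm {β : MulAut (FreeGroup (Fin n))} (hβ : β ∈ McCoolPlus n α) :
    β * zeta hn = zeta hn * β := by
  have h1 : β * zeta hn * β⁻¹ = MulAut.conj (β (FreeGroup.of (iL hn))) :=
    conj_mulaut β (FreeGroup.of (iL hn))
  rw [fix_last hn hconj hfix hβ] at h1
  have h2 : β * zeta hn * β⁻¹ = zeta hn := h1
  calc β * zeta hn = β * zeta hn * β⁻¹ * β := by group
  _ = zeta hn * β := by rw [h2]

omit hconj hfix in
theorem chiv_zeta : chiv hn (zeta hn) = 2 := by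
  rw [chiv, zeta_apply, map_mul, map_mul, map_inv, fhom_of, fhom_of, fgen_i0, fgen_iL]
  rw [← tr_one_eq, ← show ((tr 1 * Equiv.neg ℤ * (tr 1)⁻¹)) 0 = ((tr 1) * (Equiv.neg ℤ) * (tr 1)⁻¹) 0 from rfl]
  rw [conj_tr_apply]
  simp

end Zeta

section Center

variable (hn : 2 ≤ n)
  (hconj : ∀ i j : Fin n, i ≠ j →
      α i j (FreeGroup.of i) = FreeGroup.of j * FreeGroup.of i * (FreeGroup.of j)⁻¹)
  (hfix : ∀ i j k : Fin n, i ≠ j → k ≠ i → α i j (FreeGroup.of k) = FreeGroup.of k)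

/-- subgroup generated by the generators above `k` -/
def Fgt (k : Fin n) : Subgroup (FreeGroup (Fin n)) :=
  Subgroup.closure (FreeGroup.of '' {m : Fin n | k < m})

theorem Fgt_mono {k m : Fin n} (h : k < m) : Fgt m ≤ Fgt k :=
  Subgroup.closure_mono (Set.image_mono (fun x hx => lt_trans h hx))

theorem of_mem_Fgt {k m : Fin n} (h : k < m) : FreeGroup.of m ∈ Fgt k :=
  Subgroup.subset_closure ⟨m, h, rfl⟩

/-- structural predicate: each generator is sent to a conjugate of itself by a
higher-letters word -/
def FPred (β : MulAut (FreeGroup (Fin n))) : Prop :=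
  ∀ k : Fin n, ∃ w ∈ Fgt k, β (FreeGroup.of k) = w * FreeGroup.of k * w⁻¹

theorem FPred.maps {β : MulAut (FreeGroup (Fin n))} (hβ : FPred β) (k : Fin n) :
    ∀ w ∈ Fgt k, β w ∈ Fgt k := by
  intro w hw
  induction hw using Subgroup.closure_induction with
  | mem x hx =>
    obtain ⟨m, hm, rfl⟩ := hx
    obtain ⟨v, hv, he⟩ := hβ m
    rw [he]
    have hv' : v ∈ Fgt k := Fgt_mono hm hv
    exact mul_mem (mul_mem hv' (of_mem_Fgt hm)) (inv_mem hv')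
  | one => rw [map_one]; exact one_mem _
  | mul x y hx hy ihx ihy => rw [map_mul]; exact mul_mem ihx ihy
  | inv x hx ihx => rw [map_inv]; exact inv_mem ihx

include hconj hfix in
theorem qall {β : MulAut (FreeGroup (Fin n))} (hβ : β ∈ McCoolPlus n α) :
    FPred β ∧ FPred β⁻¹ := by
  induction hβ using Subgroup.closure_induction with
  | mem x hx =>
    obtain ⟨i, j, hij, rfl⟩ := hx
    have hne : i ≠ j := ne_of_lt hij
    constructor
    · intro k
      by_cases hk : k = i
      · subst hk
        exact ⟨FreeGroup.of j, of_mem_Fgt hij, hconj k j hne⟩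
      · exact ⟨1, one_mem _, by rw [hfix i j k hne hk]; group⟩
    · intro k
      by_cases hk : k = i
      · subst hk
        refine ⟨(FreeGroup.of j)⁻¹, inv_mem (of_mem_Fgt hij), ?_⟩
        apply (α k j).injective
        rw [MulAut.apply_inv_self, inv_inv, map_mul, map_mul, map_inv,
          hconj k j hne, hfix k j j hne (Ne.symm hne)]
        group
      · refine ⟨1, one_mem _, ?_⟩
        rw [one_mul, inv_one, mul_one]
        apply (α i j).injective
        rw [MulAut.apply_inv_self, hfix i j k hne hk]
  | one =>
    exact ⟨fun k => ⟨1, one_mem _, by simp⟩, fun k => ⟨1, one_mem _, by simp⟩⟩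
  | mul x y hx hy ihx ihy =>
    constructor
    · intro k
      obtain ⟨w, hw, he⟩ := ihy.1 k
      obtain ⟨v, hv, he'⟩ := ihx.1 k
      refine ⟨(x w) * v, mul_mem (ihx.1.maps k w hw) hv, ?_⟩
      show x (y (FreeGroup.of k)) = _
      rw [he, map_mul, map_mul, map_inv, he']
      group
    · intro k
      obtain ⟨w, hw, he⟩ := ihx.2 k
      obtain ⟨v, hv, he'⟩ := ihy.2 k
      refine ⟨y⁻¹ w * v, mul_mem (ihy.2.maps k w hw) hv, ?_⟩
      have h0 : ((x * y)⁻¹ : MulAut (FreeGroup (Fin n))) (FreeGroup.of k) =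
          y⁻¹ (x⁻¹ (FreeGroup.of k)) := by
        rw [mul_inv_rev]
        rfl
      rw [h0, he, map_mul, map_mul, map_inv, he']
      group
  | inv x hx ihx => exact ⟨ihx.2, by rw [inv_inv]; exact ihx.1⟩

theorem tr_one_zpow (a : ℤ) : (tr 1) ^ a = tr a := by
  have h : ∀ m : ℕ, (tr 1) ^ m = tr m := by
    intro m
    induction m with
    | zero => rw [pow_zero, Nat.cast_zero, tr_zero]
    | succ m ih =>
      rw [pow_succ, ih, tr_mul]
      all_goals (congr 1 <;> omega)
  cases a with
  | ofNat m => rw [Int.ofNat_eq_coe, zpow_natCast, h m]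
  | negSucc m =>
    rw [zpow_negSucc, h (m + 1), tr_inv]
    all_goals (congr 1 <;> omega)

include hconj hfix in
theorem alpha_fix_high {i j : Fin n} (hne : i ≠ j) {w : FreeGroup (Fin n)}
    (hw : w ∈ Fgt i) : α i j w = w := by
  induction hw using Subgroup.closure_induction with
  | mem x hx =>
    obtain ⟨m, hm, rfl⟩ := hx
    exact hfix i j m hne (ne_of_gt hm)
  | one => exact map_one _
  | mul x y hx hy ihx ihy => rw [map_mul, ihx, ihy]
  | inv x hx ihx => rw [map_inv, ihx]

include hconj hfix in
theorem central_form {c : MulAut (FreeGroup (Fin n))} (hc : c ∈ McCoolPlus n α)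
    (hcen : ∀ β ∈ McCoolPlus n α, β * c = c * β) {k : Fin n} (hk : k ≠ iL hn) :
    ∃ a : ℤ, c (FreeGroup.of k) =
      FreeGroup.of (iL hn) ^ a * FreeGroup.of k * (FreeGroup.of (iL hn) ^ a)⁻¹ := by
  have hklt : k < iL hn := lt_iL_of_ne hn hk
  obtain ⟨w, hw, he⟩ := (qall hconj hfix hc).1 k
  have hαw : α k (iL hn) w = w := alpha_fix_high hconj hfix (ne_of_lt hklt) hw
  have hcomm := hcen (α k (iL hn)) (Subgroup.subset_closure ⟨k, iL hn, hklt, rfl⟩)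
  have hEq : (α k (iL hn)) (c (FreeGroup.of k)) = c ((α k (iL hn)) (FreeGroup.of k)) := by
    have h1 := congrArg (fun f : MulAut (FreeGroup (Fin n)) => f (FreeGroup.of k)) hcomm
    simpa [MulAut.mul_apply] using h1
  rw [he, hconj k (iL hn) (ne_of_lt hklt), map_mul, map_mul, map_inv, map_mul, map_mul,
    map_inv, hαw, hconj k (iL hn) (ne_of_lt hklt), fix_last hn hconj hfix hc, he] at hEq
  -- hEq : w * (x_L * x * x_L⁻¹) * w⁻¹ = x_L * (w * x * w⁻¹) * x_L⁻¹
  set xL := FreeGroup.of (iL hn) with hxL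
  set x := FreeGroup.of k with hx
  set u := xL⁻¹ * w⁻¹ * xL * w with hu
  have hux : u * x * u⁻¹ = x := by
    have h2 : (xL⁻¹ * w⁻¹) * (w * (xL * x * xL⁻¹) * w⁻¹) * (w * xL) =
        (xL⁻¹ * w⁻¹) * (xL * (w * x * w⁻¹) * xL⁻¹) * (w * xL) := by rw [hEq]
    calc u * x * u⁻¹
        = (xL⁻¹ * w⁻¹) * (xL * (w * x * w⁻¹) * xL⁻¹) * (w * xL) := by rw [hu]; group
      _ = (xL⁻¹ * w⁻¹) * (w * (xL * x * xL⁻¹) * w⁻¹) * (w * xL) := h2.symm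
      _ = x := by group
  have humem : u ∈ Fgt k := by
    refine mul_mem (mul_mem (mul_mem (inv_mem ?_) (inv_mem hw)) ?_) hw
    · exact of_mem_Fgt hklt
    · exact of_mem_Fgt hklt
  have hucomm : Commute x u := by
    have : u * x = x * u := by
      conv_rhs => rw [← hux]
      group
    exact this.symm
  have hu1 : u = 1 := by
    apply FGAux2.eq_one_of_commute_of_avoid (s := k) hucomm
    intro l hl
    have := FGAux.letters_mem_of_mem_closure humem l hl
    exact fun hh => absurd (hh ▸ this) (lt_irrefl k)
  have hwxL : Commute xL w := by
    have h3 : xL⁻¹ * w⁻¹ * xL * w = 1 := hu1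
    have h4 := congrArg (fun v => w * xL * v) h3
    simp only [mul_one] at h4
    calc xL * w = w * xL * (xL⁻¹ * w⁻¹ * xL * w) := by group
    _ = w * xL := h4
  obtain ⟨m, hm⟩ := FGAux2.eq_zpow_of_commute hwxL
  exact ⟨m, by rw [he, hm]⟩

include hconj hfix in
theorem central_eq_one {c : MulAut (FreeGroup (Fin n))} (hc : c ∈ McCoolPlus n α)
    (hcen : ∀ β ∈ McCoolPlus n α, β * c = c * β)
    (hchi : chiv hn c / 2 = 0) : c = 1 := by
  obtain ⟨a0, h0⟩ := central_form hn hconj hfix hc hcen (i0_ne_iL hn)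
  have hvi0 : chiv hn c = 2 * a0 := by
    rw [chiv, h0, map_mul, map_mul, map_inv, map_zpow, fhom_of, fhom_of, fgen_i0, fgen_iL,
      ← tr_one_eq, tr_one_zpow, conj_tr_apply]
    simp only [Equiv.neg_apply]
    ring
  have ha0 : a0 = 0 := by
    rw [hvi0, Int.mul_ediv_cancel_left a0 (by norm_num)] at hchi
    exact hchi
  have hci0 : c (FreeGroup.of (i0 hn)) = FreeGroup.of (i0 hn) := by
    rw [h0, ha0, zpow_zero]
    group
  have hneg_inv : (Equiv.neg ℤ)⁻¹ = Equiv.neg ℤ := by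
    rw [eq_comm, eq_inv_iff_mul_eq_one]
    ext z
    simp [Equiv.Perm.mul_apply]
  have hall : ∀ k : Fin n, c (FreeGroup.of k) = FreeGroup.of k := by
    intro k
    by_cases hkL : k = iL hn
    · rw [hkL]
      exact fix_last hn hconj hfix hc
    by_cases hk0 : k = i0 hn
    · rw [hk0]
      exact hci0
    obtain ⟨a, hk⟩ := central_form hn hconj hfix hc hcen hkL
    have hi0k : i0 hn < k := by
      have h1 : (k : ℕ) ≠ 0 := fun hh => hk0 (Fin.ext (by simpa [i0] using hh))
      simp only [Fin.lt_def, i0]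
      omega
    have hcen' := hcen (α (i0 hn) k) (Subgroup.subset_closure ⟨i0 hn, k, hi0k, rfl⟩)
    have hEq : (α (i0 hn) k) (c (FreeGroup.of (i0 hn))) =
        c ((α (i0 hn) k) (FreeGroup.of (i0 hn))) := by
      have h1 := congrArg (fun f : MulAut (FreeGroup (Fin n)) => f (FreeGroup.of (i0 hn))) hcen'
      simpa [MulAut.mul_apply] using h1
    rw [hci0, hconj (i0 hn) k (ne_of_lt hi0k), map_mul, map_mul, map_inv, hci0, hk] at hEq
    -- hEq : of k * of i0 * (of k)⁻¹ = X * of i0 * X⁻¹ with X = of iL ^ a * of k * (of iL ^ a)⁻¹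
    set g : Fin n → Equiv.Perm ℤ := fun m =>
      if m = iL hn then tr 1 else if m = i0 hn ∨ m = k then Equiv.neg ℤ else 1 with hg
    have hgiL : (FreeGroup.lift g) (FreeGroup.of (iL hn)) = tr 1 := by
      rw [FreeGroup.lift_apply_of, hg]
      simp
    have hgi0 : (FreeGroup.lift g) (FreeGroup.of (i0 hn)) = Equiv.neg ℤ := by
      rw [FreeGroup.lift_apply_of, hg]
      simp [i0_ne_iL hn]
    have hgk : (FreeGroup.lift g) (FreeGroup.of k) = Equiv.neg ℤ := by
      rw [FreeGroup.lift_apply_of, hg]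
      simp [hkL]
    have hval := congrArg (fun v => (FreeGroup.lift g v) 0) hEq
    simp only [map_mul, map_inv, map_zpow, hgiL, hgi0, hgk, tr_one_zpow] at hval
    set r := tr a * Equiv.neg ℤ * (tr a)⁻¹ with hr
    have hrap : ∀ z : ℤ, r z = 2 * a - z := by
      intro z
      rw [hr, conj_tr_apply]
      simp only [Equiv.neg_apply]
      ring
    have hrinv : r⁻¹ = r := by
      rw [eq_comm, eq_inv_iff_mul_eq_one]
      ext z
      rw [Equiv.Perm.mul_apply, hrap, hrap, Equiv.Perm.one_apply]
      ring
    rw [hrinv] at hval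
    have hL : ((Equiv.neg ℤ * Equiv.neg ℤ * (Equiv.neg ℤ)⁻¹)) 0 = 0 := by
      rw [hneg_inv]
      simp [Equiv.Perm.mul_apply]
    have hR : ((r * Equiv.neg ℤ * r)) 0 = 4 * a := by
      rw [Equiv.Perm.mul_apply, Equiv.Perm.mul_apply, hrap]
      simp only [Equiv.neg_apply]
      rw [hrap]
      ring
    rw [hL, hR] at hval
    have ha : a = 0 := by omega
    rw [hk, ha, zpow_zero]
    group
  apply MulEquiv.toMonoidHom_injective
  apply FreeGroup.ext_hom
  intro k
  show c (FreeGroup.of k) = (1 : MulAut (FreeGroup (Fin n))) (FreeGroup.of k)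
  rw [hall k]
  rfl

end Center

end MCAux

/-- The upper triangular McCool group decomposes as a direct product with its
center: `PΣ_n⁺ ≅ (PΣ_n⁺ / Z(PΣ_n⁺)) × ℤ`. -/
theorem mccool_plus_direct_product (n : ℕ) (hn : 2 ≤ n)
    (α : Fin n → Fin n → MulAut (FreeGroup (Fin n)))
    (hconj : ∀ i j : Fin n, i ≠ j →
      α i j (FreeGroup.of i) = FreeGroup.of j * FreeGroup.of i * (FreeGroup.of j)⁻¹)
    (hfix : ∀ i j k : Fin n, i ≠ j → k ≠ i → α i j (FreeGroup.of k) = FreeGroup.of k) :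
    Nonempty ((McCoolPlus n α) ≃*
      ((McCoolPlus n α ⧸ Subgroup.center (McCoolPlus n α)) × Multiplicative ℤ)) := by
  classical
  set G := McCoolPlus n α with hG
  set Z := Subgroup.center ↥G with hZ
  set Φ : ↥G →* (↥G ⧸ Z) × Multiplicative ℤ :=
    (QuotientGroup.mk' Z).prod (MCAux.Chi hn hconj hfix) with hΦ
  have hChi_apply : ∀ g : ↥G, MCAux.Chi hn hconj hfix g =
      Multiplicative.ofAdd (MCAux.chiv hn g.1 / 2) := fun g => rfl
  -- injectivity
  have hinj : Function.Injective Φ := by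
    rw [injective_iff_map_eq_one]
    intro g hone
    have h1 : QuotientGroup.mk' Z g = 1 := congrArg Prod.fst hone
    have h2 : MCAux.Chi hn hconj hfix g = 1 := congrArg Prod.snd hone
    have hgZ : g ∈ Z := by
      rwa [QuotientGroup.mk'_apply, QuotientGroup.eq_one_iff] at h1
    have hcen : ∀ β ∈ G, β * g.1 = g.1 * β := by
      intro β hβ
      have := Subgroup.mem_center_iff.mp hgZ ⟨β, hβ⟩
      exact congrArg Subtype.val this
    have hchi0 : MCAux.chiv hn g.1 / 2 = 0 := by
      rw [hChi_apply] at h2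
      have := congrArg Multiplicative.toAdd h2
      simpa using this
    have : g.1 = 1 := MCAux.central_eq_one hn hconj hfix g.2 hcen hchi0
    exact Subtype.ext this
  -- surjectivity
  have hz : (⟨MCAux.zeta hn, MCAux.zeta_mem hn hconj hfix⟩ : ↥G) ∈ Z := by
    rw [hZ]
    rw [Subgroup.mem_center_iff]
    intro g
    exact Subtype.ext (MCAux.zeta_comm hn hconj hfix g.2)
  set z : ↥G := ⟨MCAux.zeta hn, MCAux.zeta_mem hn hconj hfix⟩ with hzdef
  have hchiz : MCAux.Chi hn hconj hfix z = Multiplicative.ofAdd 1 := by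
    rw [hChi_apply]
    congr 1
    show MCAux.chiv hn (MCAux.zeta hn) / 2 = 1
    rw [MCAux.chiv_zeta hn]
    norm_num
  have hsurj : Function.Surjective Φ := by
    rintro ⟨q, m⟩
    obtain ⟨g, rfl⟩ := QuotientGroup.mk'_surjective Z q
    set t : ℤ := Multiplicative.toAdd m - MCAux.chiv hn g.1 / 2 with ht
    refine ⟨g * z ^ t, ?_⟩
    have hzt : z ^ t ∈ Z := zpow_mem hz t
    apply Prod.ext
    · show QuotientGroup.mk' Z (g * z ^ t) = QuotientGroup.mk' Z g
      rw [map_mul]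
      have : QuotientGroup.mk' Z (z ^ t) = 1 := by
        rw [QuotientGroup.mk'_apply, QuotientGroup.eq_one_iff]
        exact hzt
      rw [this, mul_one]
    · show MCAux.Chi hn hconj hfix (g * z ^ t) = m
      rw [map_mul, map_zpow, hchiz, hChi_apply]
      have h4 : (Multiplicative.ofAdd (1 : ℤ)) ^ t = Multiplicative.ofAdd t := by
        rw [← ofAdd_zsmul, smul_eq_mul, mul_one]
      rw [h4, ← ofAdd_add, ht]
      simp
  exact ⟨MulEquiv.ofBijective Φ ⟨hinj, hsurj⟩⟩
end

section
/- For n = 2, the basis-conjugating automorphism group PΣ_2 is a free group of rank 2: the group homomorphism from the free group on two generators to Aut(F_2) sending the two generators to α_{1,2} and α_{2,1} is injective. -/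
namespace PSigmaTwoAux

open FreeGroup

variable {β : Type*} [DecidableEq β]

/-- If there is no cancellation at the junction, multiplying by a single letter on the
left just conses the letter onto the reduced word. -/
lemma toWord_letter_mul (x : β × Bool) (g : FreeGroup β)
    (h : ∀ y ∈ g.toWord.head?, y ≠ (x.1, !x.2)) :
    (FreeGroup.mk [x] * g).toWord = x :: g.toWord := by
  conv_lhs => rw [← FreeGroup.mk_toWord (x := g)]
  rw [FreeGroup.mul_mk, List.singleton_append, FreeGroup.toWord_mk, FreeGroup.reduce.cons,
    FreeGroup.reduce_toWord]
  cases hL : g.toWord with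
  | nil => rfl
  | cons hd tl =>
    have hhd : hd ≠ (x.1, !x.2) := h hd (by rw [hL]; rfl)
    simp only []
    rw [if_neg]
    rintro ⟨h1, h2⟩
    exact hhd (by ext <;> simp [← h1, h2])

omit [DecidableEq β] in
lemma invRev_cons (x : β × Bool) (L : List (β × Bool)) :
    FreeGroup.invRev (x :: L) = FreeGroup.invRev L ++ [(x.1, !x.2)] := by
  simp [FreeGroup.invRev]

/-- Multiplying by a single letter on the right appends the letter, if no cancellation. -/
lemma toWord_mul_letter (x : β × Bool) (g : FreeGroup β)
    (h : ∀ y ∈ g.toWord.getLast?, y ≠ (x.1, !x.2)) :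
    (g * FreeGroup.mk [x]).toWord = g.toWord ++ [x] := by
  have hinv : (g * FreeGroup.mk [x])⁻¹ = FreeGroup.mk [(x.1, !x.2)] * g⁻¹ := by
    rw [mul_inv_rev, FreeGroup.inv_mk]
    congr 1
  have hhead : ∀ y ∈ (g⁻¹).toWord.head?, y ≠ ((x.1, !x.2).1, !(x.1, !x.2).2) := by
    intro y hy
    rw [FreeGroup.toWord_inv, FreeGroup.invRev, List.head?_reverse, List.getLast?_map] at hy
    simp only [Option.mem_def, Option.map_eq_some_iff] at hy
    obtain ⟨z, hz, rfl⟩ := hy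
    have := h z (by simp [hz])
    simp only [Bool.not_not, ne_eq, Prod.mk.injEq, not_and]
    intro h1
    exact fun h2 => this (by ext <;> simp [h1, ← h2])
  have key : ((g * FreeGroup.mk [x])⁻¹).toWord = (x.1, !x.2) :: (g⁻¹).toWord := by
    rw [hinv]
    exact toWord_letter_mul _ _ hhead
  have := congrArg FreeGroup.invRev key
  rw [← FreeGroup.toWord_inv, inv_inv, invRev_cons, ← FreeGroup.toWord_inv, inv_inv] at this
  simpa using this

/-- An element of a free group commuting with all single letters is trivial
(provided there are at least two distinct letters). -/
lemma eq_one_of_commutes (g : FreeGroup (Fin 2))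
    (hc : ∀ x : (Fin 2) × Bool, Commute g (FreeGroup.mk [x])) : g = 1 := by
  by_contra hg
  have hL : g.toWord ≠ [] := fun h => hg (FreeGroup.toWord_eq_nil_iff.mp h)
  have hlast : g.toWord.getLast? = some (g.toWord.getLast hL) := List.getLast?_eq_getLast hL
  set lst := g.toWord.getLast hL with hlstdef
  -- For any letter x which cancels with neither end, commuting forces head = x.
  have key : ∀ x : (Fin 2) × Bool,
      g.toWord.head? ≠ some (x.1, !x.2) → g.toWord.getLast? ≠ some (x.1, !x.2) →
      g.toWord.head? = some x := by
    intro x h1 h2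
    have e1 : (FreeGroup.mk [x] * g).toWord = x :: g.toWord :=
      toWord_letter_mul x g (fun y hy hxy => h1 (by rw [← hxy]; exact hy))
    have e2 : (g * FreeGroup.mk [x]).toWord = g.toWord ++ [x] :=
      toWord_mul_letter x g (fun y hy hxy => h2 (by rw [← hxy]; exact hy))
    have ecomm : x :: g.toWord = g.toWord ++ [x] := by
      rw [← e1, ← e2, (hc x).eq]
    have := congrArg List.head? ecomm
    rw [List.head?_cons, List.head?_append_of_ne_nil _ hL] at this
    exact this.symm
  -- Choose two distinct letters avoiding the (at most two) forbidden values.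
  have hex : ∀ a b : (Fin 2) × Bool, ∃ u v : (Fin 2) × Bool,
      u ≠ v ∧ u ≠ a ∧ u ≠ b ∧ v ≠ a ∧ v ≠ b := by decide
  obtain ⟨u, v, huv, hu1, hu2, hv1, hv2⟩ :=
    hex (g.toWord.head hL |>.1, !(g.toWord.head hL).2) (lst.1, !lst.2)
  have hu : g.toWord.head? = some u := by
    apply key
    · rw [List.head?_eq_head hL]
      intro h
      apply hu1
      have : g.toWord.head hL = (u.1, !u.2) := by injection h
      rw [this]; ext <;> simp
    · rw [hlast]
      intro h
      apply hu2
      have : lst = (u.1, !u.2) := by injection h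
      rw [this]; ext <;> simp
  have hv : g.toWord.head? = some v := by
    apply key
    · rw [List.head?_eq_head hL]
      intro h
      apply hv1
      have : g.toWord.head hL = (v.1, !v.2) := by injection h
      rw [this]; ext <;> simp
    · rw [hlast]
      intro h
      apply hv2
      have : lst = (v.1, !v.2) := by injection h
      rw [this]; ext <;> simp
  rw [hu] at hv
  exact huv (by injection hv)

lemma conj_injective :
    Function.Injective (MulAut.conj : FreeGroup (Fin 2) →* MulAut (FreeGroup (Fin 2))) := by
  rw [injective_iff_map_eq_one]
  intro g hg
  apply eq_one_of_commutes
  intro x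
  have : ∀ z : FreeGroup (Fin 2), g * z * g⁻¹ = z := by
    intro z
    have := congrArg (fun (φ : MulAut (FreeGroup (Fin 2))) => φ z) hg
    simpa [MulAut.conj_apply] using this
  have h2 := this (FreeGroup.mk [x])
  unfold Commute SemiconjBy
  calc g * FreeGroup.mk [x] = (g * FreeGroup.mk [x] * g⁻¹) * g := by group
  _ = FreeGroup.mk [x] * g := by rw [h2]

end PSigmaTwoAux

/-- For `n = 2`, the basis-conjugating automorphism group `PΣ_2` is a free
group of rank 2: the homomorphism from the free group on two generators to `Aut(F_2)`
sending the two generators to `α_{1,2}` and `α_{2,1}` is injective. -/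
theorem psigma_two_is_free (α : Fin 2 → Fin 2 → MulAut (FreeGroup (Fin 2)))
    (hconj : ∀ i j : Fin 2, i ≠ j →
      α i j (FreeGroup.of i) = FreeGroup.of j * FreeGroup.of i * (FreeGroup.of j)⁻¹)
    (hfix : ∀ i j k : Fin 2, i ≠ j → k ≠ i → α i j (FreeGroup.of k) = FreeGroup.of k) :
    Function.Injective
      ⇑(FreeGroup.lift (fun b : Fin 2 => if b = 0 then α 0 1 else α 1 0) :
        FreeGroup (Fin 2) →* MulAut (FreeGroup (Fin 2))) := by
  -- α 0 1 and α 1 0 are inner automorphisms.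
  have h01 : α 0 1 = MulAut.conj (FreeGroup.of (1 : Fin 2)) := by
    ext z
    have : ((α 0 1 : MulAut _) : FreeGroup (Fin 2) →* FreeGroup (Fin 2)) =
        ((MulAut.conj (FreeGroup.of (1 : Fin 2)) : MulAut _) : FreeGroup (Fin 2) →* FreeGroup (Fin 2)) := by
      apply FreeGroup.ext_hom
      intro a
      fin_cases a
      · simpa [MulAut.conj_apply] using hconj 0 1 (by decide)
      · simpa [MulAut.conj_apply] using hfix 0 1 1 (by decide) (by decide)
    exact DFunLike.congr_fun this z
  have h10 : α 1 0 = MulAut.conj (FreeGroup.of (0 : Fin 2)) := by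
    ext z
    have : ((α 1 0 : MulAut _) : FreeGroup (Fin 2) →* FreeGroup (Fin 2)) =
        ((MulAut.conj (FreeGroup.of (0 : Fin 2)) : MulAut _) : FreeGroup (Fin 2) →* FreeGroup (Fin 2)) := by
      apply FreeGroup.ext_hom
      intro a
      fin_cases a
      · simpa [MulAut.conj_apply] using hfix 1 0 0 (by decide) (by decide)
      · simpa [MulAut.conj_apply] using hconj 1 0 (by decide)
    exact DFunLike.congr_fun this z
  -- The swap automorphism of the free group.
  set σ : FreeGroup (Fin 2) →* FreeGroup (Fin 2) :=
    FreeGroup.lift (fun b : Fin 2 => FreeGroup.of (if b = 0 then 1 else 0)) with hσ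
  have hσσ : ∀ z, σ (σ z) = z := by
    intro z
    have : σ.comp σ = MonoidHom.id _ := by
      apply FreeGroup.ext_hom
      intro a
      fin_cases a <;> simp [hσ]
    exact DFunLike.congr_fun this z
  have hfactor : (FreeGroup.lift (fun b : Fin 2 => if b = 0 then α 0 1 else α 1 0) :
      FreeGroup (Fin 2) →* MulAut (FreeGroup (Fin 2))) =
      (MulAut.conj : FreeGroup (Fin 2) →* MulAut (FreeGroup (Fin 2))).comp σ := by
    apply FreeGroup.ext_hom
    intro a
    fin_cases a <;> simp [hσ, h01, h10]
  rw [hfactor, MonoidHom.coe_comp]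
  exact PSigmaTwoAux.conj_injective.comp (Function.LeftInverse.injective hσσ)
end
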